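/- arXiv:1802.04077 — 2 statements merged into one kernel-verified Lean document; each statement's English description precedes it below -/
import Mathlib

section
/- Let α be a real number with α ∉ ℤ and let X be c₀(Δ^(α)) or ℓ∞(Δ^(α)). If the infinite matrix A = (a_{nk}) maps X into ℓ₁ (each row of A lies in the β-dual of X and Ax ∈ ℓ₁ for all x ∈ X), then, setting ‖A‖ = sup over finite subsets N ⊂ ℕ of ∑_{k=0}^∞ |∑_{n∈N} â_{nk}|, where â_{nk} = ∑_{j=k}^∞ (−1)^{j−k} Γ(−α+1)/((j−k)!·Γ(−α−j+k+1)) a_{nj}, the operator norm of L_A : X → ℓ₁, L_A(x) = Ax, satisfies ‖A‖ ≤ ‖L_A‖ ≤ 4‖A‖. -/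
open Filter Finset Topology

/-- The fractional difference matrix `Δ^(α)`. -/
noncomputable def fracDelta (α : ℝ) (n k : ℕ) : ℝ :=
  if k ≤ n then
    (-1 : ℝ) ^ (n - k) * Real.Gamma (α + 1) /
      ((Nat.factorial (n - k) : ℝ) * Real.Gamma (α - n + k + 1))
  else 0

/-- `(Δ^(α)x)_n = ∑_{k=0}^n Δ^(α)_{nk} x_k`. -/
noncomputable def fracDeltaSeq (α : ℝ) (x : ℕ → ℝ) (n : ℕ) : ℝ :=
  ∑ k ∈ Finset.range (n + 1), fracDelta α n k * x k

/-- Membership in `c₀(Δ^(α))`. -/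
def memC0Delta (α : ℝ) (x : ℕ → ℝ) : Prop :=
  Tendsto (fracDeltaSeq α x) atTop (nhds 0)

/-- Membership in `ℓ∞(Δ^(α))`. -/
def memLinfDelta (α : ℝ) (x : ℕ → ℝ) : Prop :=
  ∃ C : ℝ, ∀ n, |fracDeltaSeq α x n| ≤ C

/-- The norm `‖x‖ = sup_n |(Δ^(α)x)_n|`. -/
noncomputable def deltaNorm (α : ℝ) (x : ℕ → ℝ) : ℝ :=
  ⨆ n, |fracDeltaSeq α x n|

/-- Classical convergence of the series `∑_{j=0}^∞ f j` to `L`. -/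
def SeriesHasSum (f : ℕ → ℝ) (L : ℝ) : Prop :=
  Tendsto (fun m => ∑ j ∈ Finset.range m, f j) atTop (nhds L)

/-- `(Ax)_n = ∑_k a_{nk} x_k` (the limit of the partial sums, when it exists). -/
noncomputable def matMul (a : ℕ → ℕ → ℝ) (x : ℕ → ℝ) (n : ℕ) : ℝ :=
  limUnder atTop (fun m => ∑ k ∈ Finset.range m, a n k * x k)

/-- falling factorial product -/
noncomputable def ffp (x : ℝ) (i : ℕ) : ℝ := ∏ t ∈ Finset.range i, (x - t)

lemma gamma_prod {β : ℝ} (hβ : ∀ m : ℤ, β ≠ (m : ℝ)) (i : ℕ) :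
    Real.Gamma (β + 1) = ffp β i * Real.Gamma (β - i + 1) := by
  induction i with
  | zero => simp [ffp]
  | succ i ih =>
    have hne : β - i ≠ 0 := by
      intro h
      exact hβ i (by have := sub_eq_zero.mp h; exact_mod_cast this)
    have h1 : Real.Gamma (β - i + 1) = (β - i) * Real.Gamma (β - i) := by
      exact Real.Gamma_add_one hne
    rw [ih, h1, show ffp β (i+1) = ffp β i * (β - i) by rw [ffp, ffp, Finset.prod_range_succ],
      show β - ((i+1:ℕ):ℝ) + 1 = β - i by push_cast; ring]
    ring

lemma fracDelta_eq {α : ℝ} (hα : ∀ m : ℤ, α ≠ (m : ℝ)) {n k : ℕ} (hk : k ≤ n) :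
    fracDelta α n k = (-1 : ℝ) ^ (n - k) * ffp α (n - k) / (Nat.factorial (n - k) : ℝ) := by
  have hcast : α - n + k + 1 = α - ((n - k : ℕ) : ℝ) + 1 := by
    have : ((n - k : ℕ) : ℝ) = (n : ℝ) - k := by
      push_cast [hk]; ring
    rw [this]; ring
  have hGne : Real.Gamma (α - ((n-k:ℕ):ℝ) + 1) ≠ 0 := by
    apply Real.Gamma_ne_zero
    intro m h
    exact hα ((n-k : ℕ) - 1 - m) (by push_cast; linarith)
  have hfac : (Nat.factorial (n - k) : ℝ) ≠ 0 := by
    exact_mod_cast Nat.factorial_ne_zero (n-k)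
  rw [fracDelta, if_pos hk, hcast, gamma_prod hα (n - k)]
  rw [show (-1:ℝ)^(n-k) * (ffp α (n-k) * Real.Gamma (α - ((n-k:ℕ):ℝ) + 1)) =
      ((-1:ℝ)^(n-k) * ffp α (n-k)) * Real.Gamma (α - ((n-k:ℕ):ℝ) + 1) from by ring]
  rw [mul_div_mul_right _ _ hGne]

lemma ffp_vandermonde (x y : ℝ) (m : ℕ) :
    ∑ i ∈ Finset.range (m+1), (m.choose i : ℝ) * ffp x (m - i) * ffp y i = ffp (x + y) m := by
  induction m with
  | zero => simp [ffp]
  | succ m ih =>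
    have key : ∀ i ∈ Finset.range (m+2), ((m+1).choose i : ℝ) * ffp x (m+1-i) * ffp y i
        = (m.choose i : ℝ) * ffp x (m+1-i) * ffp y i
          + (if i = 0 then 0 else (m.choose (i-1) : ℝ) * ffp x (m+1-i) * ffp y i) := by
      intro i _
      rcases i with _ | i
      · simp
      · rw [if_neg (Nat.succ_ne_zero i), Nat.choose_succ_succ]
        push_cast
        ring
    rw [show m+1+1 = m+2 from rfl, Finset.sum_congr rfl key, Finset.sum_add_distrib]
    have p1 : ∑ i ∈ Finset.range (m+2), (m.choose i : ℝ) * ffp x (m+1-i) * ffp y i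
        = ∑ i ∈ Finset.range (m+1), (m.choose i : ℝ) * ffp x (m+1-i) * ffp y i := by
      rw [Finset.sum_range_succ, Nat.choose_succ_self]
      simp
    have p2 : ∑ i ∈ Finset.range (m+2),
          (if i = 0 then 0 else (m.choose (i-1) : ℝ) * ffp x (m+1-i) * ffp y i)
        = ∑ i ∈ Finset.range (m+1), (m.choose i : ℝ) * ffp x (m-i) * ffp y (i+1) := by
      rw [Finset.sum_range_succ']
      simp only [Nat.succ_ne_zero, if_false, if_true, Nat.succ_sub_one, reduceIte, add_zero]
      apply Finset.sum_congr rfl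
      intro i hi
      rw [show m+1-(i+1) = m-i from by omega]
    rw [p1, p2, ← Finset.sum_add_distrib,
      show ffp (x+y) (m+1) = ffp (x+y) m * ((x+y) - m) from by
        rw [ffp, Finset.prod_range_succ]; rfl,
      ← ih, Finset.sum_mul]
    apply Finset.sum_congr rfl
    intro i hi
    have him : i ≤ m := Nat.lt_succ_iff.mp (Finset.mem_range.mp hi)
    have h1 : ffp x (m+1-i) = ffp x (m-i) * (x - ((m : ℝ) - i)) := by
      rw [show m+1-i = (m-i)+1 from by omega, ffp, Finset.prod_range_succ, ← ffp,
        show ((m-i : ℕ) : ℝ) = (m:ℝ) - i from by push_cast [him]; ring]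
    have h2 : ffp y (i+1) = ffp y i * (y - i) := by
      rw [ffp, Finset.prod_range_succ, ← ffp]
    rw [h1, h2]
    ring

lemma ffp_zero {m : ℕ} (hm : 1 ≤ m) : ffp 0 m = 0 := by
  apply Finset.prod_eq_zero (Finset.mem_range.mpr hm)
  simp

lemma fracDelta_zero {α : ℝ} {n k : ℕ} (h : n < k) : fracDelta α n k = 0 :=
  if_neg (by omega)

lemma neg_not_int {β : ℝ} (hβ : ∀ m : ℤ, β ≠ (m : ℝ)) : ∀ m : ℤ, -β ≠ (m : ℝ) := by
  intro m h
  exact hβ (-m) (by push_cast; linarith)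

lemma fracDelta_inv {β : ℝ} (hβ : ∀ m : ℤ, β ≠ (m : ℝ)) (n k : ℕ) :
    ∑ j ∈ Finset.range (n+1), fracDelta β n j * fracDelta (-β) j k
      = if n = k then 1 else 0 := by
  have hβ' : ∀ m : ℤ, -β ≠ (m : ℝ) := neg_not_int hβ
  rcases lt_or_ge n k with hk | hk
  · rw [if_neg (by omega)]
    apply Finset.sum_eq_zero
    intro j hj
    have : j < k := by have := Finset.mem_range.mp hj; omega
    rw [fracDelta_zero this, mul_zero]
  · obtain ⟨m, rfl⟩ : ∃ m, n = m + k := ⟨n - k, by omega⟩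
    have hsplit : ∑ j ∈ Finset.range (m+k+1), fracDelta β (m+k) j * fracDelta (-β) j k
        = ∑ j ∈ Finset.Ico k (m+k+1), fracDelta β (m+k) j * fracDelta (-β) j k := by
      rw [Finset.range_eq_Ico, ← Finset.sum_Ico_consecutive _ (Nat.zero_le k) (by omega)]
      have h0 : ∑ j ∈ Finset.Ico 0 k, fracDelta β (m+k) j * fracDelta (-β) j k = 0 := by
        apply Finset.sum_eq_zero
        intro j hj
        have : j < k := by have := (Finset.mem_Ico.mp hj).2; omega
        rw [fracDelta_zero this, mul_zero]
      rw [h0, zero_add]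
    rw [hsplit, Finset.sum_Ico_eq_sum_range, show m + k + 1 - k = m + 1 from by omega]
    have hterm : ∀ i ∈ Finset.range (m+1),
        fracDelta β (m+k) (k+i) * fracDelta (-β) (k+i) k
          = (-1:ℝ)^m * ((m.choose i : ℝ) * ffp β (m-i) * ffp (-β) i) / (m.factorial : ℝ) := by
      intro i hi
      have him : i ≤ m := Nat.lt_succ_iff.mp (Finset.mem_range.mp hi)
      have h1 : k + i ≤ m + k := by omega
      rw [fracDelta_eq hβ h1, fracDelta_eq hβ' (Nat.le_add_right k i),
        show m + k - (k+i) = m - i from by omega, show k + i - k = i from by omega]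
      have hfac : ((m.choose i : ℕ) : ℝ) * (i.factorial : ℝ) * ((m-i).factorial : ℝ)
          = (m.factorial : ℝ) := by
        exact_mod_cast congrArg (Nat.cast : ℕ → ℝ)
          (Nat.choose_mul_factorial_mul_factorial him)
      have hpow : (-1:ℝ)^(m-i) * (-1:ℝ)^i = (-1:ℝ)^m := by
        rw [← pow_add, show m - i + i = m from by omega]
      have hf1 : ((m-i).factorial : ℝ) ≠ 0 := by exact_mod_cast Nat.factorial_ne_zero _
      have hf2 : ((i).factorial : ℝ) ≠ 0 := by exact_mod_cast Nat.factorial_ne_zero _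
      have hf3 : ((m).factorial : ℝ) ≠ 0 := by exact_mod_cast Nat.factorial_ne_zero _
      field_simp
      rw [← hfac, ← hpow]
      ring
    rw [Finset.sum_congr rfl hterm]
    rcases Nat.eq_zero_or_pos m with h0 | hpos
    · rw [if_pos (by omega), h0]
      simp [ffp]
    · rw [if_neg (by omega)]
      have : ∑ i ∈ Finset.range (m+1),
          (-1:ℝ)^m * ((m.choose i : ℝ) * ffp β (m-i) * ffp (-β) i) / (m.factorial : ℝ)
          = (-1:ℝ)^m / (m.factorial : ℝ) *
            ∑ i ∈ Finset.range (m+1), (m.choose i : ℝ) * ffp β (m-i) * ffp (-β) i := by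
        rw [Finset.mul_sum]
        apply Finset.sum_congr rfl
        intro i _
        ring
      rw [this, ffp_vandermonde, add_neg_cancel, ffp_zero hpos, mul_zero]

lemma fracDeltaSeq_inv {β : ℝ} (hβ : ∀ m : ℤ, β ≠ (m : ℝ)) (y : ℕ → ℝ) (n : ℕ) :
    fracDeltaSeq β (fracDeltaSeq (-β) y) n = y n := by
  rw [fracDeltaSeq]
  have hext : ∀ k ∈ Finset.range (n+1), fracDelta β n k * fracDeltaSeq (-β) y k
      = ∑ i ∈ Finset.range (n+1), fracDelta β n k * (fracDelta (-β) k i * y i) := by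
    intro k hk
    rw [fracDeltaSeq, Finset.mul_sum]
    apply Finset.sum_subset
    · intro i hi
      have h1 := Finset.mem_range.mp hi
      have h2 := Finset.mem_range.mp hk
      exact Finset.mem_range.mpr (by omega)
    · intro i _ hi
      rw [fracDelta_zero (α := -β) (Nat.lt_of_succ_le (Nat.le_of_not_lt
        (fun h => hi (Finset.mem_range.mpr h)))), zero_mul, mul_zero]
  rw [Finset.sum_congr rfl hext, Finset.sum_comm]
  have hinner : ∀ i ∈ Finset.range (n+1),
      ∑ k ∈ Finset.range (n+1), fracDelta β n k * (fracDelta (-β) k i * y i)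
        = (if n = i then 1 else 0) * y i := by
    intro i _
    rw [← fracDelta_inv hβ n i, Finset.sum_mul]
    apply Finset.sum_congr rfl
    intro k _
    ring
  rw [Finset.sum_congr rfl hinner]
  simp

lemma fracDeltaSeq_inv' {α : ℝ} (hα : ∀ m : ℤ, α ≠ (m : ℝ)) (x : ℕ → ℝ) (k : ℕ) :
    fracDeltaSeq (-α) (fracDeltaSeq α x) k = x k := by
  have := fracDeltaSeq_inv (neg_not_int hα) x k
  rwa [neg_neg] at this

noncomputable def sg (q : ℝ) : ℝ := if 0 ≤ q then 1 else -1

lemma abs_sg (q : ℝ) : |sg q| = 1 := by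
  rw [sg]; split <;> simp

lemma sg_mul (q : ℝ) : q * sg q = |q| := by
  rw [sg]
  split
  · rw [mul_one, abs_of_nonneg ‹_›]
  · rw [mul_neg_one, abs_of_neg (by linarith [not_le.mp ‹_›])]

section Blocks

variable {J : ℕ → ℕ} (hJ : StrictMono J) (hJ0 : J 0 = 0)

noncomputable def idx (J : ℕ → ℕ) (j : ℕ) : ℕ :=
  Nat.findGreatest (fun i => J i ≤ j) j

include hJ0 in
lemma idx_spec1 (j : ℕ) : J (idx J j) ≤ j :=
  Nat.findGreatest_spec (P := fun i => J i ≤ j) (m := 0) (Nat.zero_le j) (by show J 0 ≤ j; rw [hJ0]; omega)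

include hJ in
lemma idx_ge {i j : ℕ} (h : J i ≤ j) : i ≤ idx J j :=
  Nat.le_findGreatest (P := fun i => J i ≤ j) (le_trans (hJ.le_apply) h) h

include hJ in
lemma idx_spec2 (j : ℕ) : j < J (idx J j + 1) := by
  by_contra h
  push_neg at h
  have h2 : idx J j + 1 ≤ idx J j := idx_ge hJ h
  omega

include hJ in
lemma idx_eq {i j : ℕ} (h1 : J i ≤ j) (h2 : j < J (i+1)) : idx J j = i := by
  have hge : i ≤ idx J j := idx_ge hJ h1
  by_contra hne
  have : i + 1 ≤ idx J j := by omega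
  have h3 : J (idx J j) ≤ j :=
    Nat.findGreatest_spec (P := fun i => J i ≤ j) (m := i) (le_trans hJ.le_apply h1) h1
  have h4 := le_trans (hJ.monotone this) h3
  omega

end Blocks

/-- Uniform boundedness of rows, by gliding hump. -/
lemma L1 (Q : ℕ → ℕ → ℝ)
    (hcol : ∀ j, ∃ c, Tendsto (fun m => Q m j) atTop (𝓝 c))
    (hconv : ∀ y : ℕ → ℝ, Tendsto y atTop (𝓝 0) → (∀ j, |y j| ≤ 1) →
      ∃ L, Tendsto (fun m => ∑ j ∈ Finset.range m, Q m j * y j) atTop (𝓝 L)) :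
    ∃ K, ∀ m, ∑ j ∈ Finset.range m, |Q m j| ≤ K := by
  by_contra hK
  push_neg at hK
  -- column bounds
  have hcb : ∀ j, ∃ C, ∀ m, |Q m j| ≤ C := by
    intro j
    obtain ⟨c, hc⟩ := hcol j
    obtain ⟨C, hC⟩ := hc.abs.bddAbove_range
    exact ⟨C, fun m => hC ⟨m, rfl⟩⟩
  choose C hC using hcb
  set D : ℕ → ℝ := fun P => ∑ j ∈ Finset.range P, C j with hD
  have hDbd : ∀ m P, ∑ j ∈ Finset.range P, |Q m j| ≤ D P := by
    intro m P
    exact Finset.sum_le_sum (fun j _ => hC j m)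
  have hDnn : ∀ P, 0 ≤ D P := by
    intro P
    exact Finset.sum_nonneg (fun j _ => le_trans (abs_nonneg _) (hC j 0))
  set t : ℕ → ℝ := fun m => ∑ j ∈ Finset.range m, |Q m j| with ht
  have htD : ∀ m, t m ≤ D m := fun m => hDbd m m
  -- pick function
  have hpick : ∀ P : ℕ, ∀ i : ℕ, ∃ m, P < m ∧ ((i:ℝ)+1) * ((i:ℝ)+1+2*D P) < t m := by
    intro P i
    obtain ⟨m, hm⟩ := hK (max (((i:ℝ)+1) * ((i:ℝ)+1+2*D P)) (D P))
    refine ⟨m, ?_, lt_of_le_of_lt (le_max_left _ _) hm⟩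
    by_contra hle
    push_neg at hle
    have : D m ≤ D P := by
      apply Finset.sum_le_sum_of_subset_of_nonneg
      · exact Finset.range_subset_range.mpr hle
      · intro j _ _; exact le_trans (abs_nonneg _) (hC j 0)
    have := lt_of_le_of_lt (le_trans (htD m) this) (lt_of_le_of_lt (le_max_right _ _) hm)
    exact lt_irrefl _ this
  choose F hF1 hF2 using hpick
  -- recursive blocks
  set J : ℕ → ℕ := fun i => Nat.rec 0 (fun i Ji => F Ji i) i with hJdef
  have hJ0 : J 0 = 0 := rfl
  have hJsucc : ∀ i, J (i+1) = F (J i) i := fun i => rfl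
  have hJmono : StrictMono J := by
    apply strictMono_nat_of_lt_succ
    intro i
    rw [hJsucc]
    exact hF1 (J i) i
  -- the hump sequence
  set y : ℕ → ℝ := fun j => (1/((idx J j : ℝ)+1)) * sg (Q (J (idx J j + 1)) j) with hy
  have hy1 : ∀ j, |y j| ≤ 1 := by
    intro j
    rw [hy]
    simp only []
    rw [abs_mul, abs_sg, mul_one, abs_of_nonneg (by positivity)]
    rw [div_le_one (by positivity)]
    have : (0:ℝ) ≤ (idx J j : ℝ) := Nat.cast_nonneg _
    linarith
  have hidx_tendsto : Tendsto (fun j => idx J j) atTop atTop := by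
    apply tendsto_atTop.mpr
    intro i
    filter_upwards [eventually_ge_atTop (J i)] with j hj
    exact idx_ge hJmono hj
  have hy0 : Tendsto y atTop (𝓝 0) := by
    have hb : ∀ j, ‖y j‖ ≤ 1/((idx J j : ℝ)+1) := by
      intro j
      rw [Real.norm_eq_abs, hy]
      simp only []
      rw [abs_mul, abs_sg, mul_one, abs_of_nonneg (by positivity)]
    exact squeeze_zero_norm hb (tendsto_one_div_add_atTop_nhds_zero_nat.comp hidx_tendsto)
  obtain ⟨L, hL⟩ := hconv y hy0 hy1
  obtain ⟨B, hB⟩ := hL.bddAbove_range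
  obtain ⟨i, hi⟩ := exists_nat_gt B
  -- estimate s (J (i+1)) > i+1
  have hkey : (i:ℝ) + 1 < ∑ j ∈ Finset.range (J (i+1)), Q (J (i+1)) j * y j := by
    set M := J (i+1) with hM
    set P := J i with hP
    have hPM : P ≤ M := le_of_lt (hJmono (Nat.lt_succ_self i))
    rw [← Finset.sum_range_add_sum_Ico _ hPM]
    have hblock : ∀ j ∈ Finset.Ico P M, Q M j * y j = (1/((i:ℝ)+1)) * |Q M j| := by
      intro j hj
      obtain ⟨hj1, hj2⟩ := Finset.mem_Ico.mp hj
      have hidxj : idx J j = i := idx_eq hJmono hj1 hj2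
      rw [hy]
      simp only [hidxj]
      rw [← hM, mul_comm (1/((i:ℝ)+1)) _, ← mul_assoc, sg_mul, mul_comm]
    rw [Finset.sum_congr rfl hblock, ← Finset.mul_sum]
    have h1 : |∑ j ∈ Finset.range P, Q M j * y j| ≤ D P := by
      calc |∑ j ∈ Finset.range P, Q M j * y j| ≤ ∑ j ∈ Finset.range P, |Q M j * y j| :=
            Finset.abs_sum_le_sum_abs _ _
        _ ≤ ∑ j ∈ Finset.range P, |Q M j| := by
            apply Finset.sum_le_sum
            intro j _
            rw [abs_mul]
            exact mul_le_of_le_one_right (abs_nonneg _) (hy1 j)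
        _ ≤ D P := hDbd M P
    have h2 : t M - D P ≤ ∑ j ∈ Finset.Ico P M, |Q M j| := by
      have : t M = ∑ j ∈ Finset.range P, |Q M j| + ∑ j ∈ Finset.Ico P M, |Q M j| := by
        rw [ht]
        simp only []
        rw [Finset.sum_range_add_sum_Ico _ hPM]
      rw [this]
      have := hDbd M P
      linarith
    have h3 : ((i:ℝ)+1) * ((i:ℝ)+1+2*D P) < t M := by
      rw [hM, hJsucc]
      exact hF2 P i
    have hip : (0:ℝ) < (i:ℝ)+1 := by positivity
    have h4 : (i:ℝ)+1+2*D P < (1/((i:ℝ)+1)) * t M := by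
      rw [show (1/((i:ℝ)+1)) * t M = t M / ((i:ℝ)+1) from by ring, lt_div_iff₀ hip]
      nlinarith [h3]
    have h5 : (1/((i:ℝ)+1)) * (t M - D P) ≤ (1/((i:ℝ)+1)) * ∑ j ∈ Finset.Ico P M, |Q M j| :=
      mul_le_mul_of_nonneg_left h2 (by positivity)
    have h6 : (1/((i:ℝ)+1)) * D P ≤ D P := by
      rw [div_mul_eq_mul_div, one_mul, div_le_iff₀ hip]
      nlinarith [hDnn P]
    have e1 : (1/((i:ℝ)+1)) * (t M - D P)
        = (1/((i:ℝ)+1)) * t M - (1/((i:ℝ)+1)) * D P := by ring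
    have hlow := (abs_le.mp h1).1
    linarith
  have hs := hB (Set.mem_range_self (J (i+1)))
  linarith

/-- Schur-type lemma: if the weighted partial sums converge for every bounded
sequence and columns tend to 0, then the absolute row sums tend to 0. -/
lemma L2 (Q : ℕ → ℕ → ℝ)
    (hcol : ∀ j, Tendsto (fun m => Q m j) atTop (𝓝 0))
    (hconv : ∀ y : ℕ → ℝ, (∀ j, |y j| ≤ 1) →
      ∃ L, Tendsto (fun m => ∑ j ∈ Finset.range m, Q m j * y j) atTop (𝓝 L)) :
    Tendsto (fun m => ∑ j ∈ Finset.range m, |Q m j|) atTop (𝓝 0) := by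
  set t : ℕ → ℝ := fun m => ∑ j ∈ Finset.range m, |Q m j| with ht
  by_contra hK
  rw [Metric.tendsto_atTop] at hK
  push_neg at hK
  obtain ⟨ε, hε, hfreq⟩ := hK
  simp only [Real.dist_eq, sub_zero] at hfreq
  have habs : ∀ m, |t m| = t m := by
    intro m
    exact abs_of_nonneg (Finset.sum_nonneg (fun j _ => abs_nonneg _))
  have hfreq' : ∀ N, ∃ m ≥ N, ε ≤ t m := by
    intro N
    obtain ⟨m, hm1, hm2⟩ := hfreq N
    exact ⟨m, hm1, by rwa [habs] at hm2⟩
  -- small initial column sums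
  have hcolsum : ∀ P : ℕ, ∃ M, ∀ m ≥ M, ∑ j ∈ Finset.range P, |Q m j| < ε/8 := by
    intro P
    have : Tendsto (fun m => ∑ j ∈ Finset.range P, |Q m j|) atTop (𝓝 0) := by
      have : Tendsto (fun m => ∑ j ∈ Finset.range P, |Q m j|) atTop
          (𝓝 (∑ j ∈ Finset.range P, |(0:ℝ)|)) :=
        tendsto_finset_sum _ (fun j _ => (hcol j).abs)
      simpa using this
    have h8 : (0:ℝ) < ε/8 := by linarith
    obtain ⟨M, hM⟩ := (Metric.tendsto_atTop.mp this) (ε/8) h8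
    refine ⟨M, fun m hm => ?_⟩
    have := hM m hm
    rw [Real.dist_eq, sub_zero] at this
    exact lt_of_le_of_lt (le_abs_self _) this
  have hpick : ∀ P : ℕ, ∃ m, P < m ∧ ε ≤ t m ∧ ∑ j ∈ Finset.range P, |Q m j| < ε/8 := by
    intro P
    obtain ⟨M, hM⟩ := hcolsum P
    obtain ⟨m, hm1, hm2⟩ := hfreq' (max M (P+1))
    refine ⟨m, ?_, hm2, hM m (le_trans (le_max_left _ _) hm1)⟩
    have := le_trans (le_max_right M (P+1)) hm1
    omega
  choose F hF1 hF2 hF3 using hpick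
  set J : ℕ → ℕ := fun i => Nat.rec 0 (fun _ Ji => F Ji) i with hJdef
  have hJ0 : J 0 = 0 := rfl
  have hJsucc : ∀ i, J (i+1) = F (J i) := fun i => rfl
  have hJmono : StrictMono J := strictMono_nat_of_lt_succ (fun i => hF1 (J i))
  set y : ℕ → ℝ := fun j => (-1:ℝ)^(idx J j) * sg (Q (J (idx J j + 1)) j) with hy
  have hy1 : ∀ j, |y j| ≤ 1 := by
    intro j
    rw [hy]
    simp only []
    rw [abs_mul, abs_sg, mul_one, abs_pow, abs_neg, abs_one, one_pow]
  obtain ⟨L, hL⟩ := hconv y hy1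
  set s : ℕ → ℝ := fun m => ∑ j ∈ Finset.range m, Q m j * y j with hs
  -- key estimate on row J (i+1)
  have hkey : ∀ i, ((-1:ℝ)^i) * s (J (i+1)) ≥ 3*ε/4 := by
    intro i
    set M := J (i+1) with hM
    set P := J i with hP
    have hPM : P ≤ M := le_of_lt (hJmono (Nat.lt_succ_self i))
    have hsplit : s M = ∑ j ∈ Finset.range P, Q M j * y j
        + ∑ j ∈ Finset.Ico P M, Q M j * y j := by
      rw [hs]
      simp only []
      rw [Finset.sum_range_add_sum_Ico _ hPM]
    have hblock : ∀ j ∈ Finset.Ico P M, Q M j * y j = (-1:ℝ)^i * |Q M j| := by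
      intro j hj
      obtain ⟨hj1, hj2⟩ := Finset.mem_Ico.mp hj
      have hidxj : idx J j = i := idx_eq hJmono hj1 hj2
      rw [hy]
      simp only [hidxj]
      rw [← hM, ← mul_assoc, mul_comm (Q M j) ((-1:ℝ)^i), mul_assoc, sg_mul]
    have h1 : |∑ j ∈ Finset.range P, Q M j * y j| ≤ ε/8 := by
      calc |∑ j ∈ Finset.range P, Q M j * y j| ≤ ∑ j ∈ Finset.range P, |Q M j * y j| :=
            Finset.abs_sum_le_sum_abs _ _
        _ ≤ ∑ j ∈ Finset.range P, |Q M j| := by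
            apply Finset.sum_le_sum
            intro j _
            rw [abs_mul]
            exact mul_le_of_le_one_right (abs_nonneg _) (hy1 j)
        _ ≤ ε/8 := le_of_lt (by rw [hM, hJsucc]; exact hF3 P)
    have h2 : 7*ε/8 ≤ ∑ j ∈ Finset.Ico P M, |Q M j| := by
      have he : t M = ∑ j ∈ Finset.range P, |Q M j| + ∑ j ∈ Finset.Ico P M, |Q M j| := by
        rw [ht]
        simp only []
        rw [Finset.sum_range_add_sum_Ico _ hPM]
      have hεt : ε ≤ t M := by rw [hM, hJsucc]; exact hF2 P
      have hcs : ∑ j ∈ Finset.range P, |Q M j| < ε/8 := by rw [hM, hJsucc]; exact hF3 P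
      linarith
    rw [hsplit, Finset.sum_congr rfl hblock, ← Finset.mul_sum, mul_add, ← mul_assoc,
      ← mul_pow]
    simp only [neg_mul_neg, one_mul, mul_one, one_pow]
    have hlow := (abs_le.mp h1).1
    have habs2 : |((-1:ℝ)^i) * ∑ j ∈ Finset.range P, Q M j * y j| ≤ ε/8 := by
      rw [abs_mul, abs_pow, abs_neg, abs_one, one_pow, one_mul]
      exact h1
    have := (abs_le.mp habs2).1
    linarith
  -- contradiction with convergence
  have g1 : StrictMono (fun i : ℕ => 2*i+1) := strictMono_nat_of_lt_succ (fun i => by omega)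
  have g2 : StrictMono (fun i : ℕ => 2*i+2) := strictMono_nat_of_lt_succ (fun i => by omega)
  have heven : Tendsto (fun i => s (J (2*i+1))) atTop (𝓝 L) :=
    hL.comp ((hJmono.comp g1).tendsto_atTop)
  have hodd : Tendsto (fun i => s (J (2*i+2))) atTop (𝓝 L) :=
    hL.comp ((hJmono.comp g2).tendsto_atTop)
  have hLge : 3*ε/4 ≤ L := by
    apply ge_of_tendsto heven
    filter_upwards with i
    have := hkey (2*i)
    rw [pow_mul, neg_one_sq, one_pow, one_mul] at this
    exact this
  have hLle : L ≤ -(3*ε/4) := by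
    have : Tendsto (fun i => -(s (J (2*i+2)))) atTop (𝓝 (-L)) := hodd.neg
    have hge : -(3*ε/4) ≥ -L → L ≥ 3*ε/4 := by intro h; linarith
    have h2 : 3*ε/4 ≤ -L := by
      apply ge_of_tendsto this
      filter_upwards with i
      have := hkey (2*i+1)
      rw [pow_succ, pow_mul, neg_one_sq, one_pow, one_mul] at this
      linarith
    linarith
  linarith

lemma swap_sum (α : ℝ) (b y : ℕ → ℝ) (m : ℕ) :
    ∑ k ∈ Finset.range m, b k * fracDeltaSeq (-α) y k
      = ∑ j ∈ Finset.range m, (∑ k ∈ Finset.range m, fracDelta (-α) k j * b k) * y j := by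
  have h1 : ∀ k ∈ Finset.range m, b k * fracDeltaSeq (-α) y k
      = ∑ j ∈ Finset.range m, b k * (fracDelta (-α) k j * y j) := by
    intro k hk
    rw [fracDeltaSeq, Finset.mul_sum]
    apply Finset.sum_subset
    · intro i hi
      have h1 := Finset.mem_range.mp hi
      have h2 := Finset.mem_range.mp hk
      exact Finset.mem_range.mpr (by omega)
    · intro i _ hi
      have : k < i := by
        by_contra h
        exact hi (Finset.mem_range.mpr (by omega))
      rw [fracDelta_zero this, zero_mul, mul_zero]
  rw [Finset.sum_congr rfl h1, Finset.sum_comm]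
  apply Finset.sum_congr rfl
  intro j _
  rw [Finset.sum_mul]
  apply Finset.sum_congr rfl
  intro k _
  ring

lemma col_tendsto (α : ℝ) (a : ℕ → ℕ → ℝ) (Ahat : ℕ → ℕ → ℝ)
    (hAhat : ∀ n k, SeriesHasSum (fun j => fracDelta (-α) (k + j) k * a n (k + j)) (Ahat n k))
    (n j : ℕ) :
    Tendsto (fun m => ∑ k ∈ Finset.range m, fracDelta (-α) k j * a n k) atTop
      (𝓝 (Ahat n j)) := by
  have h : Tendsto (fun M => ∑ i ∈ Finset.range M, fracDelta (-α) (j + i) j * a n (j + i))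
      atTop (𝓝 (Ahat n j)) := hAhat n j
  have h2 := h.comp (tendsto_sub_atTop_nat j)
  apply h2.congr'
  filter_upwards [eventually_ge_atTop j] with m hm
  show ∑ i ∈ Finset.range (m - j), fracDelta (-α) (j + i) j * a n (j + i)
      = ∑ k ∈ Finset.range m, fracDelta (-α) k j * a n k
  have e1 : ∑ k ∈ Finset.range m, fracDelta (-α) k j * a n k
      = ∑ k ∈ Finset.Ico j m, fracDelta (-α) k j * a n k := by
    rw [← Finset.sum_range_add_sum_Ico (fun k => fracDelta (-α) k j * a n k) hm]
    have hz : ∑ k ∈ Finset.range j, fracDelta (-α) k j * a n k = 0 :=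
      Finset.sum_eq_zero (fun k hk => by
        rw [fracDelta_zero (Finset.mem_range.mp hk), zero_mul])
    rw [hz, zero_add]
  rw [e1, Finset.sum_Ico_eq_sum_range]

lemma memX_of {α : ℝ} (hα : ∀ m : ℤ, α ≠ (m : ℝ)) {X : Set (ℕ → ℝ)}
    (hX : X = {x | memC0Delta α x} ∨ X = {x | memLinfDelta α x})
    (z : ℕ → ℝ) (hz0 : Tendsto z atTop (𝓝 0)) (hz1 : ∀ j, |z j| ≤ 1) :
    fracDeltaSeq (-α) z ∈ X := by
  have he : fracDeltaSeq α (fracDeltaSeq (-α) z) = z := funext (fracDeltaSeq_inv hα z)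
  rcases hX with h | h <;> rw [h]
  · show memC0Delta α _
    rw [memC0Delta, he]
    exact hz0
  · exact ⟨1, fun n => by rw [congrFun he n]; exact hz1 n⟩

lemma memX_of_linf {α : ℝ} (hα : ∀ m : ℤ, α ≠ (m : ℝ))
    (z : ℕ → ℝ) (hz1 : ∀ j, |z j| ≤ 1) :
    fracDeltaSeq (-α) z ∈ {x | memLinfDelta α x} := by
  have he : fracDeltaSeq α (fracDeltaSeq (-α) z) = z := funext (fracDeltaSeq_inv hα z)
  exact ⟨1, fun n => by rw [congrFun he n]; exact hz1 n⟩

lemma hmatT {X : Set (ℕ → ℝ)} {a : ℕ → ℕ → ℝ}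
    (hrows : ∀ x ∈ X, ∀ n : ℕ, ∃ L : ℝ, SeriesHasSum (fun k => a n k * x k) L)
    {x : ℕ → ℝ} (hx : x ∈ X) (n : ℕ) :
    Tendsto (fun m => ∑ k ∈ Finset.range m, a n k * x k) atTop (𝓝 (matMul a x n)) := by
  obtain ⟨L, hL⟩ := hrows x hx n
  have hL' : Tendsto (fun m => ∑ k ∈ Finset.range m, a n k * x k) atTop (𝓝 L) := hL
  rw [matMul, hL'.limUnder_eq]
  exact hL'

lemma hXconvT {X : Set (ℕ → ℝ)} {a : ℕ → ℕ → ℝ}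
    (hrows : ∀ x ∈ X, ∀ n : ℕ, ∃ L : ℝ, SeriesHasSum (fun k => a n k * x k) L)
    (F : Finset ℕ) {x : ℕ → ℝ} (hx : x ∈ X) :
    Tendsto (fun m => ∑ k ∈ Finset.range m, (∑ n ∈ F, a n k) * x k) atTop
      (𝓝 (∑ n ∈ F, matMul a x n)) := by
  have h := tendsto_finset_sum F (fun n (_ : n ∈ F) => hmatT hrows hx n)
  apply h.congr
  intro m
  rw [Finset.sum_comm]
  apply Finset.sum_congr rfl
  intro k _
  rw [Finset.sum_mul]

lemma engine {α : ℝ} (hα : ∀ m : ℤ, α ≠ (m : ℝ)) {X : Set (ℕ → ℝ)}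
    (hX : X = {x | memC0Delta α x} ∨ X = {x | memLinfDelta α x})
    {a : ℕ → ℕ → ℝ}
    (hrows : ∀ x ∈ X, ∀ n : ℕ, ∃ L : ℝ, SeriesHasSum (fun k => a n k * x k) L)
    {Ahat : ℕ → ℕ → ℝ}
    (hAhat : ∀ n k, SeriesHasSum (fun j => fracDelta (-α) (k + j) k * a n (k + j)) (Ahat n k))
    (F : Finset ℕ) :
    Summable (fun j => |∑ n ∈ F, Ahat n j|) ∧
    ∀ x ∈ X, (∀ j, |fracDeltaSeq α x j| ≤ 1) →
      ∑ n ∈ F, matMul a x n = ∑' j, (∑ n ∈ F, Ahat n j) * fracDeltaSeq α x j := by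
  set b : ℕ → ℝ := fun k => ∑ n ∈ F, a n k with hb
  set q : ℕ → ℝ := fun j => ∑ n ∈ F, Ahat n j with hq
  set Q : ℕ → ℕ → ℝ := fun m j => ∑ k ∈ Finset.range m, fracDelta (-α) k j * b k with hQ
  have hQcol : ∀ j, Tendsto (fun m => Q m j) atTop (𝓝 (q j)) := by
    intro j
    have h := tendsto_finset_sum F (fun n (_ : n ∈ F) => col_tendsto α a Ahat hAhat n j)
    apply h.congr
    intro m
    rw [hQ]
    simp only []
    rw [Finset.sum_comm]
    apply Finset.sum_congr rfl
    intro k _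
    rw [hb]
    simp only []
    rw [Finset.mul_sum]
  have hQz : ∀ z : ℕ → ℝ, Tendsto z atTop (𝓝 0) → (∀ j, |z j| ≤ 1) →
      ∃ L, Tendsto (fun m => ∑ j ∈ Finset.range m, Q m j * z j) atTop (𝓝 L) := by
    intro z hz0 hz1
    refine ⟨∑ n ∈ F, matMul a (fracDeltaSeq (-α) z) n, ?_⟩
    have hmem := memX_of hα hX z hz0 hz1
    have h := hXconvT hrows F hmem
    exact h.congr (fun m => swap_sum α b z m)
  obtain ⟨K, hK⟩ := L1 Q (fun j => ⟨q j, hQcol j⟩) hQz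
  have hK0 : (0:ℝ) ≤ K := le_trans (by simp) (hK 0)
  have habs_nonneg : ∀ (m : ℕ) (j : ℕ), (0:ℝ) ≤ |Q m j| := fun m j => abs_nonneg _
  have hsq : Summable (fun j => |q j|) := by
    apply summable_of_sum_range_le (fun j => abs_nonneg _)
    intro J
    have hlim : Tendsto (fun m => ∑ j ∈ Finset.range J, |Q m j|) atTop
        (𝓝 (∑ j ∈ Finset.range J, |q j|)) :=
      tendsto_finset_sum _ (fun j _ => (hQcol j).abs)
    apply le_of_tendsto hlim
    filter_upwards [eventually_ge_atTop J] with m hm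
    calc ∑ j ∈ Finset.range J, |Q m j| ≤ ∑ j ∈ Finset.range m, |Q m j| :=
          Finset.sum_le_sum_of_subset_of_nonneg (Finset.range_subset_range.mpr hm)
            (fun j _ _ => abs_nonneg _)
      _ ≤ K := hK m
  refine ⟨hsq, ?_⟩
  intro x hx hy1
  set y : ℕ → ℝ := fracDeltaSeq α x with hyd
  have hxy : fracDeltaSeq (-α) y = x := funext (fracDeltaSeq_inv' hα x)
  have hs : Tendsto (fun m => ∑ j ∈ Finset.range m, Q m j * y j) atTop
      (𝓝 (∑ n ∈ F, matMul a x n)) := by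
    have h1 := hXconvT hrows F hx
    apply h1.congr
    intro m
    calc ∑ k ∈ Finset.range m, b k * x k
        = ∑ k ∈ Finset.range m, b k * fracDeltaSeq (-α) y k := by rw [hxy]
      _ = ∑ j ∈ Finset.range m, Q m j * y j := swap_sum α b y m
  have hqys : Summable (fun j => q j * y j) := by
    apply Summable.of_norm_bounded hsq
    intro j
    rw [Real.norm_eq_abs, abs_mul]
    exact mul_le_of_le_one_right (abs_nonneg _) (hy1 j)
  have hpart : Tendsto (fun m => ∑ j ∈ Finset.range m, q j * y j) atTop
      (𝓝 (∑' j, q j * y j)) := hqys.hasSum.tendsto_sum_nat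
  have hCq0 : (0:ℝ) ≤ ∑' j, |q j| := tsum_nonneg (fun j => abs_nonneg _)
  have hIcoq : ∀ J m : ℕ, ∑ j ∈ Finset.Ico J m, |q j| ≤ ∑' j, |q j| := by
    intro J m
    apply Summable.sum_le_tsum _ (fun j _ => abs_nonneg _) hsq
  have hdiff : Tendsto
      (fun m => ∑ j ∈ Finset.range m, (Q m j - q j) * y j) atTop (𝓝 0) := by
    rcases hX with hXc | hXl
    · -- c₀ case : ε-argument
      have hy0 : Tendsto y atTop (𝓝 0) := by
        have h := hx
        rw [hXc] at h
        exact h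
      rw [Metric.tendsto_atTop]
      intro ε hε
      set B : ℝ := K + (∑' j, |q j|) + 1 with hB
      have hBpos : 0 < B := by positivity
      set δ : ℝ := ε / (2 * B) with hδ
      have hδpos : 0 < δ := by positivity
      -- tail bound for y
      obtain ⟨J, hJ⟩ : ∃ J : ℕ, ∀ j ≥ J, |y j| ≤ δ := by
        have := (Metric.tendsto_atTop.mp hy0) δ hδpos
        obtain ⟨J, hJ⟩ := this
        exact ⟨J, fun j hj => by
          have := hJ j hj
          rw [Real.dist_eq, sub_zero] at this
          exact le_of_lt this⟩
      -- finite part tends to zero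
      have hfin : Tendsto (fun m => ∑ j ∈ Finset.range J, (Q m j - q j) * y j) atTop
          (𝓝 0) := by
        have h := tendsto_finset_sum (Finset.range J)
          (fun j (_ : j ∈ Finset.range J) =>
            (((hQcol j).sub (tendsto_const_nhds (x := q j))).mul_const (y j)))
        simp only [sub_self, zero_mul] at h
        simpa using h
      obtain ⟨N₁, hN₁⟩ := (Metric.tendsto_atTop.mp hfin) (ε/2) (by positivity)
      refine ⟨max N₁ J, fun m hm => ?_⟩
      have hmN₁ : m ≥ N₁ := le_trans (le_max_left _ _) hm
      have hmJ : m ≥ J := le_trans (le_max_right _ _) hm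
      rw [Real.dist_eq, sub_zero]
      rw [← Finset.sum_range_add_sum_Ico _ hmJ]
      have htail : |∑ j ∈ Finset.Ico J m, (Q m j - q j) * y j| ≤ δ * (K + ∑' j, |q j|) := by
        calc |∑ j ∈ Finset.Ico J m, (Q m j - q j) * y j|
            ≤ ∑ j ∈ Finset.Ico J m, |(Q m j - q j) * y j| := Finset.abs_sum_le_sum_abs _ _
          _ ≤ ∑ j ∈ Finset.Ico J m, (|Q m j| + |q j|) * δ := by
              apply Finset.sum_le_sum
              intro j hj
              rw [abs_mul]
              apply mul_le_mul (abs_sub _ _) (hJ j (Finset.mem_Ico.mp hj).1)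
                (abs_nonneg _) (by positivity)
          _ = (∑ j ∈ Finset.Ico J m, (|Q m j| + |q j|)) * δ := by rw [← Finset.sum_mul]
          _ ≤ (K + ∑' j, |q j|) * δ := by
              apply mul_le_mul_of_nonneg_right _ (le_of_lt hδpos)
              rw [Finset.sum_add_distrib]
              have h1 : ∑ j ∈ Finset.Ico J m, |Q m j| ≤ K := by
                calc ∑ j ∈ Finset.Ico J m, |Q m j| ≤ ∑ j ∈ Finset.range m, |Q m j| := by
                      apply Finset.sum_le_sum_of_subset_of_nonneg
                      · intro j hj
                        exact Finset.mem_range.mpr (Finset.mem_Ico.mp hj).2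
                      · intro j _ _
                        exact abs_nonneg _
                  _ ≤ K := hK m
              exact add_le_add h1 (hIcoq J m)
          _ = δ * (K + ∑' j, |q j|) := by ring
      have hfinb : |∑ j ∈ Finset.range J, (Q m j - q j) * y j| < ε/2 := by
        have := hN₁ m hmN₁
        rw [Real.dist_eq, sub_zero] at this
        exact this
      have hKCq : K + (∑' j, |q j|) ≤ B - 1 := by rw [hB]; ring_nf; linarith
      have hδB : δ * (K + ∑' j, |q j|) ≤ δ * (B - 1) :=
        mul_le_mul_of_nonneg_left hKCq (le_of_lt hδpos)
      have hδB2 : δ * (B - 1) < ε/2 := by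
        have h1 : δ * (B-1) = ε/2 * ((B-1)/B) := by
          rw [hδ]
          field_simp
        have h2 : (B-1)/B < 1 := by
          rw [div_lt_one hBpos]
          linarith
        have h3 : (0:ℝ) < ε/2 := by positivity
        nlinarith [mul_lt_mul_of_pos_left h2 h3]
      calc |∑ j ∈ Finset.range J, (Q m j - q j) * y j
            + ∑ j ∈ Finset.Ico J m, (Q m j - q j) * y j|
          ≤ |∑ j ∈ Finset.range J, (Q m j - q j) * y j|
            + |∑ j ∈ Finset.Ico J m, (Q m j - q j) * y j| := abs_add_le _ _
        _ < ε := by linarith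
    · -- ℓ∞ case : Schur
      have hT := L2 (fun m j => Q m j - q j)
        (fun j => by
          have := (hQcol j).sub (tendsto_const_nhds (x := q j))
          simpa using this)
        (fun z hz1 => by
          have hmem : fracDeltaSeq (-α) z ∈ X := by
            rw [hXl]
            exact memX_of_linf hα z hz1
          have h1 := (hXconvT hrows F hmem).congr (fun m => swap_sum α b z m)
          have hqzs : Summable (fun j => q j * z j) := by
            apply Summable.of_norm_bounded hsq
            intro j
            rw [Real.norm_eq_abs, abs_mul]
            exact mul_le_of_le_one_right (abs_nonneg _) (hz1 j)
          have h2 := hqzs.hasSum.tendsto_sum_nat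
          refine ⟨_, (h1.sub h2).congr (fun m => ?_)⟩
          rw [← Finset.sum_sub_distrib]
          apply Finset.sum_congr rfl
          intro j _
          ring)
      have hbound : ∀ m, ‖∑ j ∈ Finset.range m, (Q m j - q j) * y j‖
          ≤ ∑ j ∈ Finset.range m, |Q m j - q j| := by
        intro m
        rw [Real.norm_eq_abs]
        calc |∑ j ∈ Finset.range m, (Q m j - q j) * y j|
          ≤ ∑ j ∈ Finset.range m, |(Q m j - q j) * y j| := Finset.abs_sum_le_sum_abs _ _
        _ ≤ ∑ j ∈ Finset.range m, |Q m j - q j| := by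
            apply Finset.sum_le_sum
            intro j _
            rw [abs_mul]
            exact mul_le_of_le_one_right (abs_nonneg _) (hy1 j)
      exact squeeze_zero_norm hbound hT
  have hfinal : Tendsto (fun m => ∑ j ∈ Finset.range m, Q m j * y j) atTop
      (𝓝 (0 + ∑' j, q j * y j)) := by
    apply (hdiff.add hpart).congr
    intro m
    rw [← Finset.sum_add_distrib]
    apply Finset.sum_congr rfl
    intro j _
    ring
  rw [zero_add] at hfinal
  exact tendsto_nhds_unique hs hfinal

lemma matMul_finsupp {α : ℝ} {X : Set (ℕ → ℝ)}
    {a : ℕ → ℕ → ℝ}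
    (hrows : ∀ x ∈ X, ∀ n : ℕ, ∃ L : ℝ, SeriesHasSum (fun k => a n k * x k) L)
    {Ahat : ℕ → ℕ → ℝ}
    (hAhat : ∀ n k, SeriesHasSum (fun j => fracDelta (-α) (k + j) k * a n (k + j)) (Ahat n k))
    (y : ℕ → ℝ) (M : ℕ) (hy : ∀ j, M ≤ j → y j = 0)
    (hx : fracDeltaSeq (-α) y ∈ X) (n : ℕ) :
    matMul a (fracDeltaSeq (-α) y) n = ∑ j ∈ Finset.range M, Ahat n j * y j := by
  have h1 := hmatT hrows hx n
  have h2 : Tendsto (fun m => ∑ k ∈ Finset.range m, a n k * fracDeltaSeq (-α) y k) atTop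
      (𝓝 (∑ j ∈ Finset.range M, Ahat n j * y j)) := by
    have hcols := tendsto_finset_sum (Finset.range M)
      (fun j (_ : j ∈ Finset.range M) => (col_tendsto α a Ahat hAhat n j).mul_const (y j))
    apply hcols.congr'
    filter_upwards [eventually_ge_atTop M] with m hm
    calc ∑ j ∈ Finset.range M, (∑ k ∈ Finset.range m, fracDelta (-α) k j * a n k) * y j
        = ∑ j ∈ Finset.range m, (∑ k ∈ Finset.range m, fracDelta (-α) k j * a n k) * y j := by
          apply Finset.sum_subset (Finset.range_subset_range.mpr hm)
          intro j _ hj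
          rw [hy j (by have := Finset.mem_range.not.mp hj; omega), mul_zero]
      _ = ∑ k ∈ Finset.range m, a n k * fracDeltaSeq (-α) y k := (swap_sum α (fun k => a n k) y m).symm
  exact tendsto_nhds_unique h1 h2

/-- If `A ∈ (X, ℓ₁)` for `X ∈ {c₀(Δ^(α)), ℓ∞(Δ^(α))}`, then
`‖A‖ ≤ ‖L_A‖ ≤ 4‖A‖`, where
`‖A‖ = sup_{N ⊂ ℕ finite} ∑_k |∑_{n∈N} â_{nk}|`. -/
theorem operatorNorm_into_l1 (α : ℝ) (hα : ∀ m : ℤ, α ≠ (m : ℝ))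
    (X : Set (ℕ → ℝ))
    (hX : X = {x | memC0Delta α x} ∨ X = {x | memLinfDelta α x})
    (a : ℕ → ℕ → ℝ)
    (hrows : ∀ x ∈ X, ∀ n : ℕ, ∃ L : ℝ, SeriesHasSum (fun k => a n k * x k) L)
    (hmaps : ∀ x ∈ X, Summable (fun n => |matMul a x n|))
    (Ahat : ℕ → ℕ → ℝ)
    (hAhat : ∀ n k, SeriesHasSum (fun j => fracDelta (-α) (k + j) k * a n (k + j)) (Ahat n k)) :
    sSup {t : ℝ | ∃ N : Finset ℕ, t = ∑' k, |∑ n ∈ N, Ahat n k|} ≤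
      sSup {t : ℝ | ∃ x ∈ X, deltaNorm α x ≤ 1 ∧ t = ∑' n, |matMul a x n|} ∧
    sSup {t : ℝ | ∃ x ∈ X, deltaNorm α x ≤ 1 ∧ t = ∑' n, |matMul a x n|} ≤
      4 * sSup {t : ℝ | ∃ N : Finset ℕ, t = ∑' k, |∑ n ∈ N, Ahat n k|} := by
  set S1 : Set ℝ := {t : ℝ | ∃ N : Finset ℕ, t = ∑' k, |∑ n ∈ N, Ahat n k|} with hS1def
  set S2 : Set ℝ := {t : ℝ | ∃ x ∈ X, deltaNorm α x ≤ 1 ∧ t = ∑' n, |matMul a x n|} with hS2def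
  -- basic helpers
  have hnorm_le : ∀ z : ℕ → ℝ, (∀ j, |z j| ≤ 1) → deltaNorm α (fracDeltaSeq (-α) z) ≤ 1 := by
    intro z hz
    rw [deltaNorm]
    apply ciSup_le
    intro n
    rw [congrFun (funext (fracDeltaSeq_inv hα z)) n]
    exact hz n
  have hy_le_one : ∀ x ∈ X, deltaNorm α x ≤ 1 → ∀ j, |fracDeltaSeq α x j| ≤ 1 := by
    intro x hx hn j
    have hbdd : BddAbove (Set.range (fun n => |fracDeltaSeq α x n|)) := by
      rcases hX with h | h
      · rw [h] at hx
        exact (Tendsto.abs hx).bddAbove_range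
      · rw [h] at hx
        obtain ⟨C, hC⟩ := hx
        exact ⟨C, by rintro v ⟨n, rfl⟩; exact hC n⟩
    exact le_trans (le_ciSup hbdd j) hn
  -- zero elements
  have h0S1 : (0:ℝ) ∈ S1 := ⟨∅, by simp⟩
  have h0S2 : (0:ℝ) ∈ S2 := by
    refine ⟨fracDeltaSeq (-α) (fun _ => 0), memX_of hα hX _ ?_ ?_, hnorm_le _ ?_, ?_⟩
    · exact tendsto_const_nhds
    · intro j; simp
    · intro j; simp
    · have : ∀ n, matMul a (fracDeltaSeq (-α) (fun _ => (0:ℝ))) n = 0 := by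
        intro n
        have := matMul_finsupp hrows hAhat (fun _ => 0) 0 (fun j _ => rfl)
          (memX_of hα hX _ tendsto_const_nhds (fun j => by simp)) n
        simpa using this
      simp [this]
  -- first-inequality elementwise construction
  have HS1 : ∀ t ∈ S1, ∀ δ : ℝ, 0 < δ → ∃ s ∈ S2, t - δ ≤ s := by
    rintro t ⟨N, rfl⟩ δ hδ
    obtain ⟨hsumN, _⟩ := engine hα hX hrows hAhat N
    have hps := hsumN.hasSum.tendsto_sum_nat
    obtain ⟨M, hM⟩ : ∃ M, (∑' k, |∑ n ∈ N, Ahat n k|) - δ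
        < ∑ k ∈ Finset.range M, |∑ n ∈ N, Ahat n k| := by
      obtain ⟨M, hM⟩ := (Metric.tendsto_atTop.mp hps) δ hδ
      have := hM M (le_refl M)
      rw [Real.dist_eq] at this
      have := (abs_lt.mp this).1
      exact ⟨M, by linarith⟩
    set y : ℕ → ℝ := fun k => if k < M then sg (∑ n ∈ N, Ahat n k) else 0 with hydef
    have hy1 : ∀ j, |y j| ≤ 1 := by
      intro j
      rw [hydef]
      simp only []
      split
      · rw [abs_sg]
      · simp
    have hyz : ∀ j, M ≤ j → y j = 0 := by
      intro j hj
      rw [hydef]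
      simp only []
      rw [if_neg (by omega)]
    have hy0 : Tendsto y atTop (𝓝 0) := by
      apply Tendsto.congr' _ (tendsto_const_nhds (x := (0:ℝ)))
      filter_upwards [eventually_ge_atTop M] with j hj
      exact (hyz j hj).symm
    have hxX : fracDeltaSeq (-α) y ∈ X := memX_of hα hX y hy0 hy1
    have hmmf : ∀ n, matMul a (fracDeltaSeq (-α) y) n = ∑ j ∈ Finset.range M, Ahat n j * y j :=
      fun n => matMul_finsupp hrows hAhat y M hyz hxX n
    refine ⟨∑' n, |matMul a (fracDeltaSeq (-α) y) n|,
      ⟨fracDeltaSeq (-α) y, hxX, hnorm_le y hy1, rfl⟩, ?_⟩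
    have key : ∑ k ∈ Finset.range M, |∑ n ∈ N, Ahat n k|
        = ∑ n ∈ N, matMul a (fracDeltaSeq (-α) y) n := by
      rw [Finset.sum_congr rfl (fun n (_ : n ∈ N) => hmmf n), Finset.sum_comm]
      apply Finset.sum_congr rfl
      intro k hk
      have hkM : k < M := Finset.mem_range.mp hk
      have : y k = sg (∑ n ∈ N, Ahat n k) := by rw [hydef]; simp only []; rw [if_pos hkM]
      rw [← Finset.sum_mul, this, sg_mul]
    have hb1 : ∑ n ∈ N, matMul a (fracDeltaSeq (-α) y) n
        ≤ ∑ n ∈ N, |matMul a (fracDeltaSeq (-α) y) n| :=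
      Finset.sum_le_sum (fun n _ => le_abs_self _)
    have hb2 : ∑ n ∈ N, |matMul a (fracDeltaSeq (-α) y) n|
        ≤ ∑' n, |matMul a (fracDeltaSeq (-α) y) n| :=
      Summable.sum_le_tsum N (fun _ _ => abs_nonneg _) (hmaps _ hxX)
    linarith [key ▸ hM]
  -- second-inequality elementwise bound
  have HS2 : BddAbove S1 → ∀ s ∈ S2, s ≤ 2 * sSup S1 := by
    rintro hbdd s ⟨x, hx, hxn, rfl⟩
    have hy1 := hy_le_one x hx hxn
    apply Summable.tsum_le_of_sum_le (hmaps x hx)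
    intro G
    set v : ℕ → ℝ := fun n => matMul a x n with hv
    set G1 := G.filter (fun n => 0 ≤ v n) with hG1
    set G2 := G.filter (fun n => ¬ 0 ≤ v n) with hG2
    have hsplit : ∑ n ∈ G, |v n| = (∑ n ∈ G1, v n) - (∑ n ∈ G2, v n) := by
      rw [← Finset.sum_filter_add_sum_filter_not G (fun n => 0 ≤ v n) (fun n => |v n|)]
      rw [show ∑ n ∈ G1, |v n| = ∑ n ∈ G1, v n from Finset.sum_congr rfl
        (fun n hn => abs_of_nonneg (Finset.mem_filter.mp hn).2)]
      rw [show ∑ n ∈ G2, |v n| = ∑ n ∈ G2, -(v n) from Finset.sum_congr rfl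
        (fun n hn => abs_of_neg (not_le.mp (Finset.mem_filter.mp hn).2))]
      rw [Finset.sum_neg_distrib]
      ring
    have hbound : ∀ (H : Finset ℕ), |∑ n ∈ H, v n| ≤ sSup S1 := by
      intro H
      obtain ⟨hsumH, hidH⟩ := engine hα hX hrows hAhat H
      have hqys : Summable (fun j => (∑ n ∈ H, Ahat n j) * fracDeltaSeq α x j) := by
        apply Summable.of_norm_bounded hsumH
        intro j
        rw [Real.norm_eq_abs, abs_mul]
        exact mul_le_of_le_one_right (abs_nonneg _) (hy1 j)
      calc |∑ n ∈ H, v n| = |∑' j, (∑ n ∈ H, Ahat n j) * fracDeltaSeq α x j| := by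
            rw [hv]
            simp only []
            rw [hidH x hx hy1]
        _ ≤ ∑' j, |∑ n ∈ H, Ahat n j| := by
            have hsabs : Summable (fun j => |(∑ n ∈ H, Ahat n j) * fracDeltaSeq α x j|) := by
              apply Summable.of_nonneg_of_le (fun j => abs_nonneg _) _ hsumH
              intro j
              rw [abs_mul]
              exact mul_le_of_le_one_right (abs_nonneg _) (hy1 j)
            have h1a : ∑' j, (∑ n ∈ H, Ahat n j) * fracDeltaSeq α x j
                ≤ ∑' j, |(∑ n ∈ H, Ahat n j) * fracDeltaSeq α x j| :=
              Summable.tsum_le_tsum (fun j => le_abs_self _) hqys hsabs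
            have h1b : ∑' j, -|(∑ n ∈ H, Ahat n j) * fracDeltaSeq α x j|
                ≤ ∑' j, (∑ n ∈ H, Ahat n j) * fracDeltaSeq α x j :=
              Summable.tsum_le_tsum (fun j => neg_abs_le _) hsabs.neg hqys
            rw [tsum_neg] at h1b
            have h1 : |∑' j, (∑ n ∈ H, Ahat n j) * fracDeltaSeq α x j|
                ≤ ∑' j, |(∑ n ∈ H, Ahat n j) * fracDeltaSeq α x j| :=
              abs_le.mpr ⟨by linarith, h1a⟩
            refine le_trans h1 (Summable.tsum_le_tsum (fun j => ?_) hsabs hsumH)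
            rw [abs_mul]
            exact mul_le_of_le_one_right (abs_nonneg _) (hy1 j)
        _ ≤ sSup S1 := le_csSup hbdd ⟨H, rfl⟩
    have h1 := hbound G1
    have h2 := hbound G2
    have h1' := (abs_le.mp h1).2
    have h2' := (abs_le.mp h2).1
    rw [hsplit]
    linarith
  -- conclusion
  by_cases hbdd : BddAbove S1
  · have hS1nonneg : 0 ≤ sSup S1 := le_csSup hbdd h0S1
    have hS2bdd : BddAbove S2 := ⟨2 * sSup S1, fun s hs => HS2 hbdd s hs⟩
    constructor
    · apply csSup_le ⟨0, h0S1⟩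
      intro t ht
      have hstep : ∀ δ : ℝ, 0 < δ → t - δ ≤ sSup S2 := by
        intro δ hδ
        obtain ⟨s, hs, hts⟩ := HS1 t ht δ hδ
        exact le_trans hts (le_csSup hS2bdd hs)
      exact le_of_forall_sub_le hstep
    · apply csSup_le ⟨0, h0S2⟩
      intro s hs
      have := HS2 hbdd s hs
      linarith
  · have hS2unbdd : ¬ BddAbove S2 := by
      intro ⟨B, hB⟩
      apply hbdd
      refine ⟨B + 1, ?_⟩
      intro t ht
      obtain ⟨s, hs, hts⟩ := HS1 t ht 1 one_pos
      have := hB hs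
      linarith
    rw [Real.sSup_of_not_bddAbove hbdd, Real.sSup_of_not_bddAbove hS2unbdd]
    norm_num
end

section
/- Let α be a real number with α ∉ ℤ and let Y be any of c₀, c, ℓ∞ (the spaces of null, convergent, and bounded real sequences with the supremum norm). If the infinite matrix A = (a_{nk}) maps c(Δ^(α)) into Y, then the operator norm of L_A : c(Δ^(α)) → Y, L_A(x) = Ax, equals sup_n ( ∑_{k=0}^∞ |â_{nk}| + |γ_n| ), where â_{nk} = ∑_{j=k}^∞ (−1)^{j−k} Γ(−α+1)/((j−k)!·Γ(−α−j+k+1)) a_{nj} and γ_n = lim_{m→∞} ∑_{k=0}^{m} w^{(A_n)}_{mk} with w^{(A_n)}_{mk} = ∑_{j=m}^∞ (−1)^{j−k} Γ(−α+1)/((j−k)!·Γ(−α−j+k+1)) a_{nj} for 0 ≤ k ≤ m. -/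
open Filter Finset Topology

/-- Membership in `c(Δ^(α))`. -/
def memCDelta (α : ℝ) (x : ℕ → ℝ) : Prop :=
  ∃ L : ℝ, Tendsto (fracDeltaSeq α x) atTop (nhds L)

open Polynomial

noncomputable def bcoef (β : ℝ) (d : ℕ) : ℝ :=
  (-1 : ℝ) ^ d * Real.Gamma (β + 1) / ((Nat.factorial d : ℝ) * Real.Gamma (β - d + 1))

lemma fracDelta_eq_b (β : ℝ) (n k : ℕ) :
    fracDelta β n k = if k ≤ n then bcoef β (n - k) else 0 := by
  unfold fracDelta bcoef
  split_ifs with h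
  · have : (β - (n:ℝ) + k) = β - ((n - k : ℕ) : ℝ) := by
      push_cast [Nat.cast_sub h]; ring
    rw [this]
  · rfl

section nonint
variable {β : ℝ} (hβ : ∀ m : ℤ, β ≠ (m : ℝ))

include hβ

lemma shift_ne_zero (z : ℤ) : β + z ≠ 0 := by
  intro h
  exact hβ (-z) (by push_cast; linarith)

lemma Gamma_shift_ne_zero (z : ℤ) : Real.Gamma (β + z) ≠ 0 := by
  apply Real.Gamma_ne_zero
  intro m h
  exact hβ (-m - z) (by push_cast; linarith)

lemma Gamma_descPoch (d : ℕ) :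
    Real.Gamma (β + 1) = (descPochhammer ℤ d).smeval β * Real.Gamma (β - d + 1) := by
  induction d with
  | zero => simp [descPochhammer_zero, Polynomial.smeval_one]
  | succ d ih =>
    have hne : β - d ≠ 0 := by
      have := shift_ne_zero hβ (-d)
      push_cast at this ⊢; intro h; exact this (by linarith)
    have h1 : Real.Gamma (β - d + 1) = (β - d) * Real.Gamma (β - d) := Real.Gamma_add_one hne
    rw [descPochhammer_succ_right]
    rw [Polynomial.smeval_mul]
    have h2 : ((X - (d : Polynomial ℤ)).smeval β) = β - d := by
      simp [Polynomial.smeval_sub, Polynomial.smeval_X, Polynomial.smeval_natCast]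
    rw [h2]
    have h3 : β - ((d+1 : ℕ) : ℝ) + 1 = β - d := by push_cast; ring
    rw [h3, ih, h1]; ring

lemma bcoef_eq_choose (d : ℕ) :
    bcoef β d = (-1 : ℝ) ^ d * Ring.choose β d := by
  have hG : Real.Gamma (β - d + 1) ≠ 0 := by
    have := Gamma_shift_ne_zero hβ (1 - d)
    convert this using 2
    push_cast; ring
  have h := Gamma_descPoch hβ d
  have h2 : (descPochhammer ℤ d).smeval β = (d.factorial : ℝ) * Ring.choose β d := by
    rw [Ring.descPochhammer_eq_factorial_smul_choose, nsmul_eq_mul]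
  unfold bcoef
  rw [h, h2]
  field_simp

end nonint

lemma conv_id {β : ℝ} (hβ : ∀ m : ℤ, β ≠ (m : ℝ)) (d : ℕ) :
    ∑ i ∈ range (d + 1), bcoef β i * bcoef (-β) (d - i) = if d = 0 then 1 else 0 := by
  have hβ' : ∀ m : ℤ, -β ≠ (m : ℝ) := fun m h => hβ (-m) (by push_cast; linarith)
  have key : Ring.choose (β + -β) d = ∑ ij ∈ antidiagonal d, Ring.choose β ij.1 * Ring.choose (-β) ij.2 :=
    Ring.add_choose_eq d (Commute.all _ _)
  rw [add_neg_cancel, Ring.choose_zero_ite] at key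
  have : ∑ i ∈ range (d + 1), bcoef β i * bcoef (-β) (d - i)
      = (-1:ℝ)^d * ∑ ij ∈ antidiagonal d, Ring.choose β ij.1 * Ring.choose (-β) ij.2 := by
    rw [Finset.Nat.sum_antidiagonal_eq_sum_range_succ (f := fun i j => Ring.choose β i * Ring.choose (-β) j),
      Finset.mul_sum]
    refine Finset.sum_congr rfl fun i hi => ?_
    have hi' : i ≤ d := Nat.lt_succ_iff.mp (Finset.mem_range.mp hi)
    rw [bcoef_eq_choose hβ, bcoef_eq_choose hβ']
    have : (-1:ℝ)^i * (-1:ℝ)^(d-i) = (-1:ℝ)^d := by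
      rw [← pow_add, Nat.add_sub_cancel' hi']
    ring_nf
    rw [mul_assoc, this]
  rw [this, ← key]
  split_ifs with h
  · subst h; simp
  · simp [Ring.choose_zero_pos ℝ (Nat.pos_of_ne_zero h)]

lemma fracDelta_of_gt (β : ℝ) {n k : ℕ} (h : n < k) : fracDelta β n k = 0 := by
  rw [fracDelta_eq_b, if_neg (by omega)]

lemma delta_conv {β : ℝ} (hβ : ∀ m : ℤ, β ≠ (m : ℝ)) (n j : ℕ) :
    ∑ k ∈ range (n + 1), fracDelta β n k * fracDelta (-β) k j = if n = j then 1 else 0 := by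
  rcases lt_or_ge n j with hj | hj
  · rw [if_neg (by omega)]
    refine Finset.sum_eq_zero fun k hk => ?_
    have : k < j := by have := Finset.mem_range.mp hk; omega
    rw [fracDelta_of_gt _ this, mul_zero]
  · have hsub : Ico j (n + 1) ⊆ range (n + 1) := fun k hk => by
      simp only [Finset.mem_Ico] at hk; exact Finset.mem_range.mpr (by omega)
    rw [← Finset.sum_subset hsub (fun k hk hk2 => by
      have : k < j := by
        simp only [Finset.mem_range] at hk; simp only [Finset.mem_Ico] at hk2; omega
      rw [fracDelta_of_gt _ this, mul_zero])]
    rw [Finset.sum_Ico_eq_sum_range]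
    have hrw : ∀ i ∈ range (n + 1 - j), fracDelta β n (j + i) * fracDelta (-β) (j + i) j
        = bcoef β (n - j - i) * bcoef (-β) i := by
      intro i hi
      have hi' : i ≤ n - j := by have := Finset.mem_range.mp hi; omega
      rw [fracDelta_eq_b, fracDelta_eq_b, if_pos (by omega), if_pos (by omega)]
      congr 2 <;> omega
    rw [Finset.sum_congr rfl hrw]
    have hd : n + 1 - j = (n - j) + 1 := by omega
    rw [hd, ← Finset.sum_range_reflect]
    simp only [Nat.add_sub_cancel]
    have : ∀ i ∈ range ((n - j) + 1), bcoef β (n - j - ((n-j) - i)) * bcoef (-β) ((n-j) - i)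
        = bcoef β i * bcoef (-β) ((n-j) - i) := by
      intro i hi
      have : i ≤ n - j := by have := Finset.mem_range.mp hi; omega
      congr 2; omega
    rw [Finset.sum_congr rfl this, conv_id hβ]
    congr 1
    simp only [eq_iff_iff]
    omega

section main
variable {α : ℝ} (hα : ∀ m : ℤ, α ≠ (m : ℝ))
include hα

lemma hα' : ∀ m : ℤ, -α ≠ (m : ℝ) := fun m h => hα (-m) (by push_cast; linarith)

/-- recovery: `x = Δ^{-α} (Δ^α x)` -/
lemma recover (x : ℕ → ℝ) (k : ℕ) :
    ∑ j ∈ range (k + 1), fracDelta (-α) k j * fracDeltaSeq α x j = x k := by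
  unfold fracDeltaSeq
  have step : ∀ j ∈ range (k+1), fracDelta (-α) k j * ∑ i ∈ range (j+1), fracDelta α j i * x i
      = ∑ i ∈ range (k+1), fracDelta (-α) k j * (fracDelta α j i * x i) := by
    intro j hj
    have hj' : j < k + 1 := Finset.mem_range.mp hj
    rw [Finset.mul_sum]
    apply Finset.sum_subset
    · intro i hi
      have := Finset.mem_range.mp hi
      exact Finset.mem_range.mpr (by omega)
    · intro i hi hi2
      have h1 := Finset.mem_range.mp hi
      have h2 : j < i := by
        by_contra h
        exact hi2 (Finset.mem_range.mpr (by omega))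
      rw [fracDelta_of_gt _ h2]; ring
  rw [Finset.sum_congr rfl step, Finset.sum_comm]
  have inner : ∀ i ∈ range (k+1), ∑ j ∈ range (k+1), fracDelta (-α) k j * (fracDelta α j i * x i)
      = (if k = i then 1 else 0) * x i := by
    intro i hi
    simp only [← mul_assoc]
    rw [← Finset.sum_mul]
    congr 1
    have := delta_conv (hα' hα) k i
    rwa [neg_neg] at this
  rw [Finset.sum_congr rfl inner]
  simp

/-- forward: `Δ^α (Δ^{-α} y) = y` -/
lemma forward (y : ℕ → ℝ) (n : ℕ) :
    fracDeltaSeq α (fun k => ∑ j ∈ range (k + 1), fracDelta (-α) k j * y j) n = y n := by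
  unfold fracDeltaSeq
  have step : ∀ k ∈ range (n+1), fracDelta α n k * ∑ j ∈ range (k+1), fracDelta (-α) k j * y j
      = ∑ j ∈ range (n+1), fracDelta α n k * (fracDelta (-α) k j * y j) := by
    intro k hk
    have hk' : k < n + 1 := Finset.mem_range.mp hk
    rw [Finset.mul_sum]
    apply Finset.sum_subset
    · intro i hi
      have := Finset.mem_range.mp hi
      exact Finset.mem_range.mpr (by omega)
    · intro j hj hj2
      have h1 := Finset.mem_range.mp hj
      have h2 : k < j := by
        by_contra h
        exact hj2 (Finset.mem_range.mpr (by omega))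
      rw [fracDelta_of_gt _ h2]; ring
  rw [Finset.sum_congr rfl step, Finset.sum_comm]
  have inner : ∀ j ∈ range (n+1), ∑ k ∈ range (n+1), fracDelta α n k * (fracDelta (-α) k j * y j)
      = (if n = j then 1 else 0) * y j := by
    intro j hj
    simp only [← mul_assoc]
    rw [← Finset.sum_mul]
    congr 1
    exact delta_conv hα n j
  rw [Finset.sum_congr rfl inner]
  simp

end main

-- ### helpers around OnePoint ℕ

lemma tendsto_coe_onePoint : Tendsto (OnePoint.some : ℕ → OnePoint ℕ) atTop (𝓝 OnePoint.infty) := by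
  rw [OnePoint.nhds_infty_eq]
  have h1 : Filter.coclosedCompact ℕ = atTop := by
    rw [Filter.coclosedCompact_eq_cocompact, Filter.cocompact_eq_cofinite, Nat.cofinite_eq_atTop]
  refine Tendsto.mono_right ?_ le_sup_left
  rw [h1]
  exact Filter.tendsto_map

lemma exists_continuousMap_of_tendsto (s : ℕ → ℝ) (c : ℝ) (hs : Tendsto s atTop (𝓝 c)) :
    ∃ g : C(OnePoint ℕ, ℝ), (∀ j : ℕ, g (OnePoint.some j) = s j) ∧ g OnePoint.infty = c := by
  refine ⟨⟨fun z => Option.elim z c s, ?_⟩, fun j => rfl, rfl⟩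
  rw [OnePoint.continuous_iff]
  constructor
  · have h1 : Filter.coclosedCompact ℕ = atTop := by
      rw [Filter.coclosedCompact_eq_cocompact, Filter.cocompact_eq_cofinite, Nat.cofinite_eq_atTop]
    rw [h1]
    exact hs
  · exact continuous_of_discreteTopology

lemma bdd_of_tendsto {u : ℕ → ℝ} {l : ℝ} (h : Tendsto u atTop (𝓝 l)) : ∃ C, ∀ m, |u m| ≤ C := by
  obtain ⟨C, hC⟩ := h.abs.bddAbove_range
  exact ⟨C, fun m => hC ⟨m, rfl⟩⟩

lemma real_mul_sign (x : ℝ) : x * Real.sign x = |x| := by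
  rcases lt_trichotomy x 0 with h | h | h
  · rw [Real.sign_of_neg h, abs_of_neg h]; ring
  · simp [h]
  · rw [Real.sign_of_pos h, abs_of_pos h]; ring

lemma abs_sign_le_one (x : ℝ) : |Real.sign x| ≤ 1 := by
  rcases Real.sign_apply_eq x with h | h | h <;> rw [h] <;> norm_num

-- ### uniform boundedness

lemma uniform_bound (T : ℕ → ℕ → ℝ)
    (hconv : ∀ y : ℕ → ℝ, (∃ L, Tendsto y atTop (𝓝 L)) →
      ∃ S, Tendsto (fun m => ∑ j ∈ range m, T m j * y j) atTop (𝓝 S)) :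
    ∃ M : ℝ, 0 ≤ M ∧ ∀ m, ∑ j ∈ range m, |T m j| ≤ M := by
  let f : ℕ → C(OnePoint ℕ, ℝ) →L[ℝ] ℝ :=
    fun m => ∑ j ∈ range m, T m j • (ContinuousMap.evalCLM ℝ (OnePoint.some j))
  have hfapp : ∀ m (g : C(OnePoint ℕ, ℝ)), f m g = ∑ j ∈ range m, T m j * g (OnePoint.some j) := by
    intro m g
    simp only [f, ContinuousLinearMap.coe_sum', Finset.sum_apply,
      ContinuousLinearMap.coe_smul', Pi.smul_apply, smul_eq_mul]
    rfl
  have hpt : ∀ g : C(OnePoint ℕ, ℝ), ∃ C, ∀ m, ‖f m g‖ ≤ C := by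
    intro g
    have hy : Tendsto (fun j : ℕ => g (OnePoint.some j)) atTop (𝓝 (g OnePoint.infty)) :=
      (g.continuous.tendsto OnePoint.infty).comp tendsto_coe_onePoint
    obtain ⟨S, hS⟩ := hconv (fun j => g (OnePoint.some j)) ⟨_, hy⟩
    obtain ⟨C, hC⟩ := bdd_of_tendsto hS
    exact ⟨C, fun m => by rw [hfapp]; exact hC m⟩
  obtain ⟨C, hC⟩ := banach_steinhaus hpt
  have hC0 : 0 ≤ C := le_trans (norm_nonneg _) (hC 0)
  refine ⟨C, hC0, fun m => ?_⟩
  have hsgn : Tendsto (fun j => if j < m then Real.sign (T m j) else 0) atTop (𝓝 0) := by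
    apply tendsto_atTop_of_eventually_const (i₀ := m)
    intro j hj
    rw [if_neg (by omega)]
  obtain ⟨g, hg1, hg2⟩ := exists_continuousMap_of_tendsto _ 0 hsgn
  have hgnorm : ‖g‖ ≤ 1 := by
    rw [ContinuousMap.norm_le _ zero_le_one]
    intro z
    cases z with
    | infty => simpa using le_of_eq_of_le (congrArg (|·|) hg2) (by norm_num)
    | coe j =>
      rw [Real.norm_eq_abs]
      rw [show g (OnePoint.some j) = _ from hg1 j]
      split_ifs
      · exact abs_sign_le_one _
      · norm_num
  have key : ∑ j ∈ range m, |T m j| = f m g := by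
    rw [hfapp]
    refine Finset.sum_congr rfl fun j hj => ?_
    rw [hg1 j, if_pos (Finset.mem_range.mp hj), real_mul_sign]
  rw [key]
  calc f m g ≤ |f m g| := le_abs_self _
    _ = ‖f m g‖ := rfl
    _ ≤ ‖f m‖ * ‖g‖ := (f m).le_opNorm g
    _ ≤ C * 1 := by
        apply mul_le_mul (hC m) hgnorm (norm_nonneg _) hC0
    _ = C := mul_one C

-- ### column bounds and the key limit theorem

lemma abs_col_bound (T : ℕ → ℕ → ℝ) (Ah : ℕ → ℝ) (M : ℝ)
    (hM : ∀ m, ∑ j ∈ range m, |T m j| ≤ M)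
    (hcol : ∀ j, Tendsto (fun m => T m j) atTop (𝓝 (Ah j))) :
    ∀ J, ∑ j ∈ range J, |Ah j| ≤ M := by
  intro J
  have h1 : Tendsto (fun m => ∑ j ∈ range J, |T m j|) atTop (𝓝 (∑ j ∈ range J, |Ah j|)) :=
    tendsto_finset_sum _ (fun j _ => (hcol j).abs)
  apply le_of_tendsto h1
  filter_upwards [eventually_ge_atTop J] with m hm
  calc ∑ j ∈ range J, |T m j| ≤ ∑ j ∈ range m, |T m j| :=
        Finset.sum_le_sum_of_subset_of_nonneg (Finset.range_subset_range.mpr hm)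
          (fun _ _ _ => abs_nonneg _)
    _ ≤ M := hM m

set_option maxHeartbeats 1000000 in
lemma key_tendsto (T : ℕ → ℕ → ℝ) (Ah : ℕ → ℝ) (M : ℝ)
    (hM : ∀ m, ∑ j ∈ range m, |T m j| ≤ M)
    (hcol : ∀ j, Tendsto (fun m => T m j) atTop (𝓝 (Ah j)))
    (z : ℕ → ℝ) (hz : Tendsto z atTop (𝓝 0)) :
    Tendsto (fun m => ∑ j ∈ range m, T m j * z j) atTop (𝓝 (∑' j, Ah j * z j)) := by
  have hM0 : 0 ≤ M := le_trans (by simp) (hM 0)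
  have hcb : ∀ J, ∑ j ∈ range J, |Ah j| ≤ M := abs_col_bound T Ah M hM hcol
  have hAsum : Summable (fun j => |Ah j|) :=
    summable_of_sum_range_le (f := fun j => |Ah j|) (fun _ => abs_nonneg _) hcb
  have hAM : ∑' j, |Ah j| ≤ M :=
    Real.tsum_le_of_sum_range_le (fun _ => abs_nonneg _) hcb
  obtain ⟨Cz, hCz⟩ := bdd_of_tendsto hz
  have hsum : Summable (fun j => Ah j * z j) := by
    apply Summable.of_abs
    apply Summable.of_nonneg_of_le (fun _ => abs_nonneg _) (fun j => ?_) (hAsum.mul_right Cz)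
    rw [abs_mul]
    exact mul_le_mul_of_nonneg_left (hCz j) (abs_nonneg _)
  rw [Metric.tendsto_atTop]
  intro ε hε
  set δ := ε / 3 / (M + 1) with hδdef
  have hδ : 0 < δ := by positivity
  have hδM : δ * M ≤ ε / 3 := by
    rw [hδdef, div_mul_eq_mul_div, div_le_iff₀ (by linarith)]
    have : M ≤ M + 1 := by linarith
    nlinarith [div_nonneg hε.le (by norm_num : (0:ℝ) ≤ 3)]
  obtain ⟨J₀, hJ₀⟩ := Metric.tendsto_atTop.mp hz δ hδ
  have hzδ : ∀ j, J₀ ≤ j → |z j| ≤ δ := by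
    intro j hj
    have := hJ₀ j hj
    rw [Real.dist_eq, sub_zero] at this
    exact this.le
  have hhead : Tendsto (fun m => ∑ j ∈ range J₀, T m j * z j) atTop
      (𝓝 (∑ j ∈ range J₀, Ah j * z j)) :=
    tendsto_finset_sum _ (fun j _ => (hcol j).mul_const _)
  obtain ⟨N₁, hN₁⟩ := Metric.tendsto_atTop.mp hhead (ε/3) (by positivity)
  refine ⟨max N₁ J₀, fun m hm => ?_⟩
  have hmJ : J₀ ≤ m := le_trans (le_max_right _ _) hm
  have hsplit : ∑ j ∈ range m, T m j * z j
      = ∑ j ∈ range J₀, T m j * z j + ∑ j ∈ Ico J₀ m, T m j * z j := by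
    rw [Finset.range_eq_Ico, ← Finset.sum_Ico_consecutive _ (Nat.zero_le _) hmJ,
      ← Finset.range_eq_Ico]
  have hS : (∑' j, Ah j * z j)
      = ∑ j ∈ range J₀, Ah j * z j + ∑' i, Ah (i + J₀) * z (i + J₀) :=
    (hsum.sum_add_tsum_nat_add J₀).symm
  rw [Real.dist_eq, hsplit, hS]
  have hterm1 : |∑ j ∈ range J₀, T m j * z j - ∑ j ∈ range J₀, Ah j * z j| < ε/3 := by
    have := hN₁ m (le_trans (le_max_left _ _) hm)
    rwa [Real.dist_eq] at this
  have hterm2 : |∑ j ∈ Ico J₀ m, T m j * z j| ≤ δ * M := by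
    calc |∑ j ∈ Ico J₀ m, T m j * z j| ≤ ∑ j ∈ Ico J₀ m, |T m j * z j| :=
          Finset.abs_sum_le_sum_abs _ _
      _ ≤ ∑ j ∈ Ico J₀ m, |T m j| * δ := by
          refine Finset.sum_le_sum fun j hj => ?_
          rw [abs_mul]
          exact mul_le_mul_of_nonneg_left (hzδ j (Finset.mem_Ico.mp hj).1) (abs_nonneg _)
      _ = (∑ j ∈ Ico J₀ m, |T m j|) * δ := (Finset.sum_mul _ _ _).symm
      _ ≤ M * δ := by
          refine mul_le_mul_of_nonneg_right ?_ hδ.le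
          calc ∑ j ∈ Ico J₀ m, |T m j| ≤ ∑ j ∈ range m, |T m j| := by
                rw [Finset.range_eq_Ico]
                exact Finset.sum_le_sum_of_subset_of_nonneg
                  (Finset.Ico_subset_Ico (Nat.zero_le _) le_rfl) (fun _ _ _ => abs_nonneg _)
            _ ≤ M := hM m
      _ = δ * M := mul_comm _ _
  have htailsum : Summable (fun i => Ah (i + J₀) * z (i + J₀)) := by
    exact (summable_nat_add_iff J₀).mpr hsum
  have htailabs : Summable (fun i => |Ah (i + J₀)|) := (summable_nat_add_iff J₀).mpr hAsum
  have hterm3 : |∑' i, Ah (i + J₀) * z (i + J₀)| ≤ δ * M := by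
    calc |∑' i, Ah (i + J₀) * z (i + J₀)| ≤ ∑' i, |Ah (i + J₀) * z (i + J₀)| := by
          simpa only [Real.norm_eq_abs] using
            norm_tsum_le_tsum_norm (f := fun i => Ah (i + J₀) * z (i + J₀))
              (by simpa only [Real.norm_eq_abs] using htailsum.abs)
      _ ≤ ∑' i, |Ah (i + J₀)| * δ := by
          refine Summable.tsum_le_tsum (fun i => ?_) htailsum.abs (htailabs.mul_right δ)
          rw [abs_mul]
          exact mul_le_mul_of_nonneg_left (hzδ _ (Nat.le_add_left _ _)) (abs_nonneg _)
      _ = (∑' i, |Ah (i + J₀)|) * δ := tsum_mul_right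
      _ ≤ M * δ := by
          refine mul_le_mul_of_nonneg_right ?_ hδ.le
          have := hAsum.sum_add_tsum_nat_add J₀
          have hhead0 : 0 ≤ ∑ j ∈ range J₀, |Ah j| :=
            Finset.sum_nonneg fun _ _ => abs_nonneg _
          linarith [hAM]
      _ = δ * M := mul_comm _ _
  set P := ∑ j ∈ range J₀, T m j * z j with hP
  set Q := ∑ j ∈ Ico J₀ m, T m j * z j with hQ
  set R := ∑ j ∈ range J₀, Ah j * z j with hR
  set Sb := ∑' i, Ah (i + J₀) * z (i + J₀) with hSb
  have heq : P + Q - (R + Sb) = ((P - R) + Q) + (-Sb) := by ring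
  have hfin : |P + Q - (R + Sb)| ≤ |P - R| + |Q| + |Sb| := by
    rw [heq]
    calc |((P - R) + Q) + (-Sb)| ≤ |(P - R) + Q| + |(-Sb)| := abs_add_le _ _
      _ ≤ (|P - R| + |Q|) + |(-Sb)| := add_le_add_left (abs_add_le _ _) _
      _ = |P - R| + |Q| + |Sb| := by rw [abs_neg]
  calc |P + Q - (R + Sb)| ≤ |P - R| + |Q| + |Sb| := hfin
    _ < ε/3 + δ * M + δ * M :=
        add_lt_add_of_lt_of_le (add_lt_add_of_lt_of_le hterm1 hterm2) hterm3
    _ ≤ ε/3 + ε/3 + ε/3 := by linarith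
    _ = ε := by ring

lemma rep_tendsto (T : ℕ → ℕ → ℝ) (Ah : ℕ → ℝ) (M : ℝ)
    (hM : ∀ m, ∑ j ∈ range m, |T m j| ≤ M)
    (hcol : ∀ j, Tendsto (fun m => T m j) atTop (𝓝 (Ah j)))
    (G : ℝ) (hG : Tendsto (fun m => ∑ j ∈ range m, T m j) atTop (𝓝 G))
    (y : ℕ → ℝ) (L : ℝ) (hy : Tendsto y atTop (𝓝 L)) :
    Tendsto (fun m => ∑ j ∈ range m, T m j * y j) atTop
      (𝓝 (∑' j, Ah j * (y j - L) + L * G)) := by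
  have hz : Tendsto (fun j => y j - L) atTop (𝓝 0) := by
    simpa using hy.sub_const L
  have h1 := key_tendsto T Ah M hM hcol _ hz
  have h2 := hG.const_mul L
  have h3 := h1.add h2
  refine h3.congr fun m => ?_
  rw [Finset.mul_sum, ← Finset.sum_add_distrib]
  refine Finset.sum_congr rfl fun j _ => ?_
  ring

-- ### transform and T-matrix lemmas

noncomputable def Tmat (α : ℝ) (a : ℕ → ℕ → ℝ) (n m j : ℕ) : ℝ :=
  ∑ k ∈ Finset.Ico j m, fracDelta (-α) k j * a n k

lemma partial_transform {α : ℝ} (hα : ∀ m : ℤ, α ≠ (m : ℝ)) (a : ℕ → ℕ → ℝ) (n : ℕ)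
    (x : ℕ → ℝ) (m : ℕ) :
    ∑ k ∈ range m, a n k * x k = ∑ j ∈ range m, Tmat α a n m j * fracDeltaSeq α x j := by
  set y := fracDeltaSeq α x with hy
  have step1 : ∀ k ∈ range m, a n k * x k
      = ∑ j ∈ range m, a n k * (fracDelta (-α) k j * y j) := by
    intro k hk
    have hk' : k < m := Finset.mem_range.mp hk
    rw [← recover hα x k, Finset.mul_sum]
    apply Finset.sum_subset
    · intro j hj
      exact Finset.mem_range.mpr (by have := Finset.mem_range.mp hj; omega)
    · intro j hj hj2
      have : k < j := by
        have := Finset.mem_range.mp hj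
        by_contra h
        exact hj2 (Finset.mem_range.mpr (by omega))
      rw [fracDelta_of_gt _ this]; ring
  rw [Finset.sum_congr rfl step1, Finset.sum_comm]
  refine Finset.sum_congr rfl fun j hj => ?_
  have hj' : j < m := Finset.mem_range.mp hj
  rw [Tmat, Finset.sum_mul, Finset.range_eq_Ico,
    ← Finset.sum_Ico_consecutive _ (Nat.zero_le j) hj'.le]
  have hzero : ∑ k ∈ Ico 0 j, a n k * (fracDelta (-α) k j * y j) = 0 := by
    apply Finset.sum_eq_zero
    intro k hk
    have : k < j := (Finset.mem_Ico.mp hk).2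
    rw [fracDelta_of_gt _ this]; ring
  rw [hzero, zero_add]
  exact Finset.sum_congr rfl fun k hk => by ring

lemma Tmat_col {α : ℝ} {a : ℕ → ℕ → ℝ} {n j : ℕ} {Aj : ℝ}
    (h : Tendsto (fun M => ∑ i ∈ range M, fracDelta (-α) (j + i) j * a n (j + i)) atTop (𝓝 Aj)) :
    Tendsto (fun m => Tmat α a n m j) atTop (𝓝 Aj) := by
  have h1 : ∀ M, ∑ i ∈ range M, fracDelta (-α) (j + i) j * a n (j + i) = Tmat α a n (j + M) j := by
    intro M
    rw [Tmat, Finset.sum_Ico_eq_sum_range]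
    have h0 : j + M - j = M := by omega
    rw [h0]
  have h2 := h.comp (tendsto_sub_atTop_nat j)
  refine h2.congr' ?_
  filter_upwards [eventually_ge_atTop j] with m hm
  simp only [Function.comp]
  rw [h1]
  congr 1
  omega

lemma Wval {α : ℝ} {a : ℕ → ℕ → ℝ} {n m j : ℕ} (hjm : j ≤ m) {Aj w : ℝ}
    (hcol : Tendsto (fun m' => Tmat α a n m' j) atTop (𝓝 Aj))
    (hw : Tendsto (fun M => ∑ i ∈ range M, fracDelta (-α) (m + i) j * a n (m + i)) atTop (𝓝 w)) :
    w = Aj - Tmat α a n m j := by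
  have h1 : ∀ M, ∑ i ∈ range M, fracDelta (-α) (m + i) j * a n (m + i)
      = Tmat α a n (m + M) j - Tmat α a n m j := by
    intro M
    have hsplit : Tmat α a n (m + M) j
        = Tmat α a n m j + ∑ k ∈ Ico m (m + M), fracDelta (-α) k j * a n k := by
      rw [Tmat, Tmat, Finset.sum_Ico_consecutive _ hjm (Nat.le_add_right m M)]
    rw [hsplit, Finset.sum_Ico_eq_sum_range]
    have h2 : m + M - m = M := by omega
    rw [h2]
    ring
  have h2 : Tendsto (fun M => Tmat α a n (m + M) j) atTop (𝓝 Aj) := by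
    have := hcol.comp (tendsto_add_atTop_nat m)
    refine this.congr fun M => ?_
    simp only [Function.comp]
    congr 1
    omega
  have h3 := h2.sub_const (Tmat α a n m j)
  have h4 := h3.congr (fun M => (h1 M).symm)
  exact tendsto_nhds_unique hw h4

lemma summable_mul_bdd {Ah y : ℕ → ℝ} (hA : Summable (fun j => |Ah j|)) {C : ℝ}
    (hy : ∀ j, |y j| ≤ C) : Summable (fun j => Ah j * y j) := by
  apply Summable.of_abs
  apply Summable.of_nonneg_of_le (fun _ => abs_nonneg _) (fun j => ?_) (hA.mul_right C)
  rw [abs_mul]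
  exact mul_le_mul_of_nonneg_left (hy j) (abs_nonneg _)

lemma abs_sub'' (a b : ℝ) : |a - b| ≤ |a| + |b| := by
  rw [sub_eq_add_neg]
  exact (abs_add_le a (-b)).trans (by rw [abs_neg])

set_option maxHeartbeats 2000000 in
/-- If `A ∈ (c(Δ^(α)), Y)` for `Y ∈ {c₀, c, ℓ∞}`, then
`‖L_A‖ = sup_n ( ∑_k |â_{nk}| + |γ_n| )`. -/
theorem operatorNorm_cDelta_into_linf (α : ℝ) (hα : ∀ m : ℤ, α ≠ (m : ℝ))
    (Y : Set (ℕ → ℝ))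
    (hY : Y = {y | Tendsto y atTop (nhds 0)} ∨
          Y = {y | ∃ L : ℝ, Tendsto y atTop (nhds L)} ∨
          Y = {y | ∃ C : ℝ, ∀ n, |y n| ≤ C})
    (a : ℕ → ℕ → ℝ)
    (hrows : ∀ x : ℕ → ℝ, memCDelta α x → ∀ n : ℕ, ∃ L : ℝ, SeriesHasSum (fun k => a n k * x k) L)
    (hmaps : ∀ x : ℕ → ℝ, memCDelta α x → matMul a x ∈ Y)
    (Ahat : ℕ → ℕ → ℝ)
    (hAhat : ∀ n k, SeriesHasSum (fun j => fracDelta (-α) (k + j) k * a n (k + j)) (Ahat n k))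
    (W : ℕ → ℕ → ℕ → ℝ)
    (hW : ∀ n m k, k ≤ m →
      SeriesHasSum (fun j => fracDelta (-α) (m + j) k * a n (m + j)) (W n m k))
    (γ : ℕ → ℝ)
    (hγ : ∀ n, Tendsto (fun m => ∑ k ∈ Finset.range (m + 1), W n m k) atTop (nhds (γ n))) :
    sSup {t : ℝ | ∃ x : ℕ → ℝ, memCDelta α x ∧ deltaNorm α x ≤ 1 ∧ t = ⨆ n, |matMul a x n|} =
      ⨆ n, (∑' k, |Ahat n k|) + |γ n| := by
  classical
  set S : Set ℝ :=
    {t : ℝ | ∃ x : ℕ → ℝ, memCDelta α x ∧ deltaNorm α x ≤ 1 ∧ t = ⨆ n, |matMul a x n|} with hSdef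
  set R : ℕ → ℝ := fun n => (∑' k, |Ahat n k|) + |γ n| with hRdef
  -- column limits of the T matrix
  have hTcol : ∀ n j, Tendsto (fun m => Tmat α a n m j) atTop (𝓝 (Ahat n j)) :=
    fun n j => Tmat_col (hAhat n j)
  -- uniform bounds per row
  have hUB : ∀ n, ∃ M, 0 ≤ M ∧ ∀ m, ∑ j ∈ range m, |Tmat α a n m j| ≤ M := by
    intro n
    apply uniform_bound
    rintro y ⟨L, hL⟩
    set x : ℕ → ℝ := fun k => ∑ j ∈ range (k + 1), fracDelta (-α) k j * y j with hx
    have hxy : fracDeltaSeq α x = y := funext (forward hα y)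
    have hmem : memCDelta α x := ⟨L, by rw [hxy]; exact hL⟩
    obtain ⟨Sx, hSx⟩ := hrows x hmem n
    refine ⟨Sx, hSx.congr fun m => ?_⟩
    rw [partial_transform hα a n x m, hxy]
  choose Mb hMb0 hMb using hUB
  have hAsum : ∀ n, Summable (fun j => |Ahat n j|) := fun n =>
    summable_of_sum_range_le (fun _ => abs_nonneg _)
      (abs_col_bound _ _ _ (hMb n) (hTcol n))
  have hAsum' : ∀ n, Summable (Ahat n) := fun n => (hAsum n).of_abs
  have hW_eq : ∀ n m j, j ≤ m → W n m j = Ahat n j - Tmat α a n m j :=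
    fun n m j hjm => Wval hjm (hTcol n j) (hW n m j hjm)
  -- limit of the row sums of T
  have hG : ∀ n, Tendsto (fun m => ∑ j ∈ range m, Tmat α a n m j) atTop
      (𝓝 ((∑' j, Ahat n j) - γ n)) := by
    intro n
    have e1 : ∀ m, ∑ j ∈ range m, Tmat α a n m j
        = ∑ j ∈ range (m + 1), Ahat n j - ∑ j ∈ range (m + 1), W n m j := by
      intro m
      have hWm : W n m m = Ahat n m := by
        have h := hW_eq n m m le_rfl
        rw [h, Tmat]
        simp
      rw [Finset.sum_range_succ, Finset.sum_range_succ, hWm]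
      have h2 : ∑ j ∈ range m, Tmat α a n m j = ∑ j ∈ range m, (Ahat n j - W n m j) :=
        Finset.sum_congr rfl fun j hj => by
          rw [hW_eq n m j (le_of_lt (Finset.mem_range.mp hj))]; ring
      rw [h2, Finset.sum_sub_distrib]
      ring
    have t1 : Tendsto (fun m => ∑ j ∈ range (m + 1), Ahat n j) atTop (𝓝 (∑' j, Ahat n j)) := by
      have h := (hAsum' n).hasSum.tendsto_sum_nat
      exact h.comp (tendsto_add_atTop_nat 1)
    have := t1.sub (hγ n)
    exact this.congr fun m => (e1 m).symm
  -- representation of the matrix action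
  have hrep : ∀ (n : ℕ) (x : ℕ → ℝ), memCDelta α x →
      ∀ L, Tendsto (fracDeltaSeq α x) atTop (𝓝 L) →
      matMul a x n = (∑' j, Ahat n j * fracDeltaSeq α x j) - L * γ n := by
    intro n x hx L hL
    obtain ⟨Sx, hSx⟩ := hrows x hx n
    have hS' : Tendsto (fun m => ∑ j ∈ range m, Tmat α a n m j * fracDeltaSeq α x j)
        atTop (𝓝 Sx) := hSx.congr fun m => partial_transform hα a n x m
    have hR2 := rep_tendsto (fun m j => Tmat α a n m j) (Ahat n) (Mb n) (hMb n) (hTcol n)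
        _ (hG n) (fracDeltaSeq α x) L hL
    have hSval : Sx = ∑' j, Ahat n j * (fracDeltaSeq α x j - L)
        + L * ((∑' j, Ahat n j) - γ n) := tendsto_nhds_unique hS' hR2
    have hmat : matMul a x n = Sx := hSx.limUnder_eq
    obtain ⟨C, hC⟩ := bdd_of_tendsto hL
    have hs1 : Summable (fun j => Ahat n j * fracDeltaSeq α x j) :=
      summable_mul_bdd (hAsum n) hC
    have hs2 : Summable (fun j => Ahat n j * L) := (hAsum' n).mul_right L
    have e2 : ∑' j, Ahat n j * (fracDeltaSeq α x j - L)
        = (∑' j, Ahat n j * fracDeltaSeq α x j) - ∑' j, Ahat n j * L := by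
      rw [← hs1.tsum_sub hs2]
      congr 1
      funext j
      ring
    have e3 : ∑' j, Ahat n j * L = (∑' j, Ahat n j) * L := tsum_mul_right
    rw [hmat, hSval, e2, e3]
    ring
  -- upper bound
  have hupper : ∀ x : ℕ → ℝ, memCDelta α x → deltaNorm α x ≤ 1 →
      ∀ n, |matMul a x n| ≤ R n := by
    intro x hx hxn n
    obtain ⟨L, hL⟩ := hx
    rw [hrep n x ⟨L, hL⟩ L hL]
    have hbdd : BddAbove (Set.range fun j => |fracDeltaSeq α x j|) := hL.abs.bddAbove_range
    have hyb : ∀ j, |fracDeltaSeq α x j| ≤ 1 := fun j =>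
      le_trans (le_ciSup hbdd j) hxn
    have hL1 : |L| ≤ 1 := le_of_tendsto' hL.abs hyb
    have hs1 : Summable (fun j => Ahat n j * fracDeltaSeq α x j) :=
      summable_mul_bdd (hAsum n) hyb
    calc |(∑' j, Ahat n j * fracDeltaSeq α x j) - L * γ n|
        ≤ |∑' j, Ahat n j * fracDeltaSeq α x j| + |L * γ n| := abs_sub'' _ _
      _ ≤ (∑' k, |Ahat n k|) + |γ n| := by
          apply add_le_add
          · calc |∑' j, Ahat n j * fracDeltaSeq α x j|
                ≤ ∑' j, |Ahat n j * fracDeltaSeq α x j| := by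
                  simpa only [Real.norm_eq_abs] using
                    norm_tsum_le_tsum_norm (f := fun j => Ahat n j * fracDeltaSeq α x j)
                      (by simpa only [Real.norm_eq_abs] using hs1.abs)
              _ ≤ ∑' j, |Ahat n j| := by
                  refine Summable.tsum_le_tsum (fun j => ?_) hs1.abs (hAsum n)
                  rw [abs_mul]
                  calc |Ahat n j| * |fracDeltaSeq α x j| ≤ |Ahat n j| * 1 :=
                        mul_le_mul_of_nonneg_left (hyb j) (abs_nonneg _)
                    _ = |Ahat n j| := mul_one _
          · rw [abs_mul]
            calc |L| * |γ n| ≤ 1 * |γ n| :=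
                  mul_le_mul_of_nonneg_right hL1 (abs_nonneg _)
              _ = |γ n| := one_mul _
  -- boundedness of each image sequence
  have himgbdd : ∀ x : ℕ → ℝ, memCDelta α x → ∃ C, ∀ n', |matMul a x n'| ≤ C := by
    intro x hx
    have hmY := hmaps x hx
    rcases hY with h | h | h
    · rw [h] at hmY
      exact bdd_of_tendsto hmY
    · rw [h] at hmY
      obtain ⟨L', hL'⟩ := hmY
      exact bdd_of_tendsto hL'
    · rw [h] at hmY
      exact hmY
  -- lower-bound construction
  have hconstruct : ∀ n : ℕ, ∀ ε : ℝ, 0 < ε → ∃ t ∈ S, R n - ε ≤ t := by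
    intro n ε hε
    have hhead : Tendsto (fun J => ∑ j ∈ range J, |Ahat n j|) atTop
        (𝓝 (∑' j, |Ahat n j|)) := (hAsum n).hasSum.tendsto_sum_nat
    obtain ⟨J, hJ⟩ := Metric.tendsto_atTop.mp hhead (ε/2) (by positivity)
    have hJd := hJ J le_rfl
    rw [Real.dist_eq] at hJd
    set y : ℕ → ℝ := fun j => if j < J then Real.sign (Ahat n j) else -Real.sign (γ n) with hy
    have hyt : Tendsto y atTop (𝓝 (-Real.sign (γ n))) := by
      apply tendsto_atTop_of_eventually_const (i₀ := J)
      intro j hj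
      simp only [hy]
      rw [if_neg (by omega)]
    set x : ℕ → ℝ := fun k => ∑ j ∈ range (k + 1), fracDelta (-α) k j * y j with hx
    have hxy : fracDeltaSeq α x = y := funext (forward hα y)
    have hmem : memCDelta α x := ⟨_, by rw [hxy]; exact hyt⟩
    have hyb : ∀ j, |y j| ≤ 1 := by
      intro j
      simp only [hy]
      split_ifs
      · exact abs_sign_le_one _
      · rw [abs_neg]; exact abs_sign_le_one _
    have hnorm : deltaNorm α x ≤ 1 := by
      rw [deltaNorm]
      refine ciSup_le fun j => ?_
      rw [hxy]
      exact hyb j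
    refine ⟨⨆ n', |matMul a x n'|, ⟨x, hmem, hnorm, rfl⟩, ?_⟩
    have hs1 : Summable (fun j => Ahat n j * y j) := summable_mul_bdd (hAsum n) hyb
    have hval : matMul a x n = (∑' j, Ahat n j * y j) + |γ n| := by
      have h1 := hrep n x hmem _ (by rw [hxy]; exact hyt)
      rw [hxy] at h1
      rw [h1]
      have h2 : Real.sign (γ n) * γ n = |γ n| := by
        rw [mul_comm]; exact real_mul_sign (γ n)
      have : -Real.sign (γ n) * γ n = -|γ n| := by rw [neg_mul, h2]
      rw [this]
      ring
    have hdecomp : ∑' j, Ahat n j * y j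
        = ∑ j ∈ range J, Ahat n j * y j + ∑' i, Ahat n (i + J) * y (i + J) :=
      (hs1.sum_add_tsum_nat_add J).symm
    have hheadval : ∑ j ∈ range J, Ahat n j * y j = ∑ j ∈ range J, |Ahat n j| := by
      refine Finset.sum_congr rfl fun j hj => ?_
      simp only [hy]
      rw [if_pos (Finset.mem_range.mp hj), real_mul_sign]
    have htailabs : Summable (fun i => |Ahat n (i + J)|) :=
      (summable_nat_add_iff J).mpr (hAsum n)
    have htails : Summable (fun i => Ahat n (i + J) * y (i + J)) :=
      (summable_nat_add_iff J).mpr hs1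
    have htail : |∑' i, Ahat n (i + J) * y (i + J)| ≤ ε/2 := by
      have h3 : |∑' i, Ahat n (i + J) * y (i + J)| ≤ ∑' i, |Ahat n (i + J)| := by
        calc |∑' i, Ahat n (i + J) * y (i + J)| ≤ ∑' i, |Ahat n (i + J) * y (i + J)| := by
              simpa only [Real.norm_eq_abs] using
                norm_tsum_le_tsum_norm (f := fun i => Ahat n (i + J) * y (i + J))
                  (by simpa only [Real.norm_eq_abs] using htails.abs)
          _ ≤ ∑' i, |Ahat n (i + J)| := by
              refine Summable.tsum_le_tsum (fun i => ?_) htails.abs htailabs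
              rw [abs_mul]
              calc |Ahat n (i + J)| * |y (i + J)| ≤ |Ahat n (i + J)| * 1 :=
                    mul_le_mul_of_nonneg_left (hyb _) (abs_nonneg _)
                _ = _ := mul_one _
      have h4 : ∑' i, |Ahat n (i + J)| = (∑' j, |Ahat n j|) - ∑ j ∈ range J, |Ahat n j| := by
        have := (hAsum n).sum_add_tsum_nat_add J
        linarith
      have h5 : (∑' j, |Ahat n j|) - ∑ j ∈ range J, |Ahat n j| ≤ ε/2 := by
        cases abs_le.mp hJd.le with
        | intro h6 h7 => linarith
      linarith
    have hlow : R n - ε ≤ matMul a x n := by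
      rw [hval, hdecomp, hheadval, hRdef]
      have h8 : ∑ j ∈ range J, |Ahat n j| ≥ (∑' j, |Ahat n j|) - ε/2 := by
        cases abs_le.mp hJd.le with
        | intro h6 h7 => linarith
      have h9 : ∑' i, Ahat n (i + J) * y (i + J) ≥ -(ε/2) := by
        have := neg_abs_le (∑' i, Ahat n (i + J) * y (i + J))
        linarith
      simp only
      linarith
    obtain ⟨C, hC⟩ := himgbdd x hmem
    have hbdd : BddAbove (Set.range fun n' => |matMul a x n'|) :=
      ⟨C, fun t ⟨n', hn'⟩ => hn' ▸ hC n'⟩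
    calc R n - ε ≤ matMul a x n := hlow
      _ ≤ |matMul a x n| := le_abs_self _
      _ ≤ ⨆ n', |matMul a x n'| := le_ciSup hbdd n
  -- final assembly
  by_cases hRb : BddAbove (Set.range R)
  · have hR0 : (0:ℝ) ≤ ⨆ n, R n := by
      refine le_trans ?_ (le_ciSup hRb 0)
      have : 0 ≤ ∑' k, |Ahat 0 k| := tsum_nonneg fun _ => abs_nonneg _
      have : 0 ≤ R 0 := by
        rw [hRdef]
        positivity
      exact this
    apply le_antisymm
    · apply Real.sSup_le _ hR0
      rintro t ⟨x, hx, hxn, rfl⟩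
      obtain ⟨C, hC⟩ := himgbdd x hx
      refine ciSup_le fun n => ?_
      exact le_trans (hupper x hx hxn n) (le_ciSup hRb n)
    · have hSbdd : BddAbove S := by
        refine ⟨⨆ n, R n, ?_⟩
        rintro t ⟨x, hx, hxn, rfl⟩
        refine ciSup_le fun n => le_trans (hupper x hx hxn n) (le_ciSup hRb n)
      refine ciSup_le fun n => ?_
      refine le_of_forall_pos_le_add fun ε hε => ?_
      obtain ⟨t, htS, ht⟩ := hconstruct n ε hε
      have := le_csSup hSbdd htS
      linarith
  · rw [Real.iSup_of_not_bddAbove hRb]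
    rw [Real.sSup_of_not_bddAbove]
    intro hSb
    apply hRb
    obtain ⟨c, hc⟩ := hSb
    refine ⟨c + 1, ?_⟩
    rintro r ⟨n, rfl⟩
    obtain ⟨t, htS, ht⟩ := hconstruct n 1 one_pos
    have := hc htS
    linarith
end
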